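/- arXiv:1502.01442 — 6 statements merged into one kernel-verified Lean document; each statement's English description precedes it below -/
import Mathlib

section
/- If G is a k-regular connected vertex-transitive finite simple graph, then the edge-connectivity of G equals k. -/
open SimpleGraph

variable {V : Type*}

/-- `G` has a perfect matching. -/
def HasPerfectMatching (G : SimpleGraph V) : Prop :=
  ∃ M : G.Subgraph, M.IsPerfectMatching

/-- `F` is a matching preclusion set of `G`. -/
def IsMPSet (G : SimpleGraph V) (F : Finset (Sym2 V)) : Prop :=
  ↑F ⊆ G.edgeSet ∧ ¬ HasPerfectMatching (G.deleteEdges ↑F)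

/-- The matching preclusion number of `G`. -/
noncomputable def mpNumber (G : SimpleGraph V) : ℕ :=
  sInf {n | ∃ F : Finset (Sym2 V), IsMPSet G F ∧ F.card = n}

/-- `G` is `k`-regular. -/
def GIsRegular (G : SimpleGraph V) (k : ℕ) : Prop :=
  ∀ v : V, (G.neighborSet v).ncard = k

/-- `G` is vertex-transitive. -/
def VertexTransitive (G : SimpleGraph V) : Prop :=
  ∀ x y : V, ∃ φ : G ≃g G, φ x = y

/-- The minimum degree of `G`. -/
noncomputable def minDeg (G : SimpleGraph V) : ℕ :=
  sInf {d | ∃ v : V, (G.neighborSet v).ncard = d}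

/-- The edge-connectivity of `G`. -/
noncomputable def edgeConnectivity (G : SimpleGraph V) : ℕ :=
  sInf {n | ∃ F : Finset (Sym2 V), ↑F ⊆ G.edgeSet ∧ F.card = n ∧
    ¬ (G.deleteEdges ↑F).Connected}

/-!
Mader's atom argument. Call a nonempty proper vertex set `A` a fragment if its edge boundary
`∂A` has the least possible size `λ'`, and an atom if it is a fragment of least cardinality.
Submodularity and posimodularity of `|∂·|` force an atom to lie inside every fragment it meets.
If `λ' < k`, every vertex of an atom `A` has at least `k + 1 - |A|` neighbours outside `A`, and
`|A| (k + 1 - |A|) ≥ k` forces `|∂A| < |A|`; so some `w ∈ A` has all its neighbours in `A`, while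
connectivity gives `u ∈ A` with a neighbour outside `A`. An automorphism `φ` with `φ w = u` sends
`A` to a fragment meeting `A`, hence to `A` itself, and then sends the neighbours of `w` into `A`:
a contradiction. Hence every edge cut has at least `k` edges, and the `k` edges at a vertex
form one.
-/

open Finset

theorem GIsRegular.isRegularOfDegree [Fintype V] {G : SimpleGraph V} [DecidableRel G.Adj]
    {k : ℕ} (h : GIsRegular G k) : G.IsRegularOfDegree k := fun v ↦ by
  rw [← h v, Set.ncard_eq_toFinset_card', Set.toFinset_card, card_neighborSet_eq_degree]

namespace SimpleGraph

variable [Fintype V] [DecidableEq V] (G : SimpleGraph V) [DecidableRel G.Adj]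

def edgeBoundary (A : Finset V) : Finset (V × V) := G.interedges A Aᶜ

variable {G}

theorem mem_edgeBoundary {A : Finset V} {p : V × V} :
    p ∈ G.edgeBoundary A ↔ p.1 ∈ A ∧ p.2 ∉ A ∧ G.Adj p.1 p.2 := by
  simp [edgeBoundary, mem_interedges_iff]

variable (G)

theorem card_edgeBoundary_compl (A : Finset V) : #(G.edgeBoundary Aᶜ) = #(G.edgeBoundary A) := by
  have := G.symm
  rw [edgeBoundary, compl_compl]
  exact Rel.card_interedges_comm _ _

theorem card_edgeBoundary_inter_add_card_edgeBoundary_union_le (A B : Finset V) :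
    #(G.edgeBoundary (A ∩ B)) + #(G.edgeBoundary (A ∪ B)) ≤
      #(G.edgeBoundary A) + #(G.edgeBoundary B) := by
  have hfilter (S : Finset V) :
      G.edgeBoundary S = univ.filter fun p : V × V ↦ p.1 ∈ S ∧ p.2 ∉ S ∧ G.Adj p.1 p.2 := by
    ext; simp [mem_edgeBoundary]
  rw [hfilter, hfilter, hfilter, hfilter]
  simp only [card_filter, ← sum_add_distrib]
  refine sum_le_sum fun p _ ↦ ?_
  by_cases p.1 ∈ A <;> by_cases p.1 ∈ B <;> by_cases p.2 ∈ A <;> by_cases p.2 ∈ B <;>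
    by_cases G.Adj p.1 p.2 <;> simp_all

theorem card_edgeBoundary_sdiff_add_card_edgeBoundary_sdiff_le (A B : Finset V) :
    #(G.edgeBoundary (A \ B)) + #(G.edgeBoundary (B \ A)) ≤
      #(G.edgeBoundary A) + #(G.edgeBoundary B) := by
  have h := G.card_edgeBoundary_inter_add_card_edgeBoundary_union_le A Bᶜ
  rwa [← sdiff_eq_inter_compl, ← compl_compl (A ∪ Bᶜ), compl_union, compl_compl,
    inter_comm, ← sdiff_eq_inter_compl, card_edgeBoundary_compl, card_edgeBoundary_compl] at h

theorem card_edgeBoundary_eq_sum (A : Finset V) :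
    #(G.edgeBoundary A) = ∑ v ∈ A, #(G.neighborFinset v \ A) := by
  rw [card_eq_sum_card_fiberwise (f := Prod.fst) (t := A) fun p hp ↦ (mem_edgeBoundary.1 hp).1]
  refine sum_congr rfl fun v hv ↦ card_nbij' Prod.snd (fun w ↦ (v, w)) ?_ ?_ ?_ ?_
  all_goals intro p; simp +contextual [mem_edgeBoundary, hv, eq_comm]

variable {G}

theorem card_edgeBoundary_image {W : Type*} [Fintype W] [DecidableEq W] {G' : SimpleGraph W}
    [DecidableRel G'.Adj] (φ : G ≃g G') (A : Finset V) :
    #(G'.edgeBoundary (A.image φ)) = #(G.edgeBoundary A) := by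
  have hmem (B : Finset V) (w : W) : w ∈ B.image φ ↔ φ.symm w ∈ B := by
    rw [← φ.apply_symm_apply w, φ.injective.mem_finset_image, φ.apply_symm_apply]
  refine card_nbij' (Prod.map φ.symm φ.symm) (Prod.map φ φ) ?_ ?_ ?_ ?_ <;>
    rintro ⟨u, v⟩ <;> simp [mem_edgeBoundary, hmem, φ.map_adj_iff, φ.symm.map_adj_iff]

theorem Preconnected.edgeBoundary_nonempty (hG : G.Preconnected) {A : Finset V}
    (hA : A.Nonempty) (hAc : Aᶜ.Nonempty) : (G.edgeBoundary A).Nonempty := by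
  obtain ⟨u, hu⟩ := hA
  obtain ⟨v, hv⟩ := hAc
  obtain ⟨p⟩ := hG u v
  obtain ⟨d, -, hd₁, hd₂⟩ := p.exists_boundary_dart A hu (by simpa using hv)
  exact ⟨d.toProd, mem_edgeBoundary.2 ⟨hd₁, hd₂, d.adj⟩⟩

variable (G) in
structure IsFragment (A : Finset V) : Prop where
  nonempty : A.Nonempty
  compl_nonempty : Aᶜ.Nonempty
  card_edgeBoundary_le : ∀ B : Finset V, B.Nonempty → Bᶜ.Nonempty →
    #(G.edgeBoundary A) ≤ #(G.edgeBoundary B)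

variable (G) in
structure IsAtom (A : Finset V) : Prop extends G.IsFragment A where
  card_le : ∀ B : Finset V, G.IsFragment B → #A ≤ #B

variable (G) in
theorem exists_isAtom [Nontrivial V] : ∃ A, G.IsAtom A := by
  classical
  obtain ⟨v, w, hvw⟩ := exists_pair_ne V
  obtain ⟨A, hA, hAmin⟩ := exists_min_image {A : Finset V | A.Nonempty ∧ Aᶜ.Nonempty}
    (fun A ↦ #(G.edgeBoundary A)) ⟨{v}, by simpa using ⟨w, by simpa using hvw.symm⟩⟩
  simp only [mem_filter, mem_univ, true_and] at hA hAmin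
  have hfrag : G.IsFragment A := ⟨hA.1, hA.2, fun B hB hBc ↦ hAmin B ⟨hB, hBc⟩⟩
  obtain ⟨B, hB, hBmin⟩ := exists_min_image {B : Finset V | G.IsFragment B} card
    ⟨A, by simpa using hfrag⟩
  simp only [mem_filter, mem_univ, true_and] at hB hBmin
  exact ⟨B, hB, hBmin⟩

namespace IsFragment

variable {A B : Finset V}

theorem of_card_edgeBoundary_le (hA : G.IsFragment A) (hB : B.Nonempty) (hBc : Bᶜ.Nonempty)
    (h : #(G.edgeBoundary B) ≤ #(G.edgeBoundary A)) : G.IsFragment B :=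
  ⟨hB, hBc, fun C hC hCc ↦ h.trans (hA.card_edgeBoundary_le C hC hCc)⟩

theorem inter (hA : G.IsFragment A) (hB : G.IsFragment B) (h : (A ∩ B).Nonempty)
    (hc : (A ∪ B)ᶜ.Nonempty) : G.IsFragment (A ∩ B) := by
  refine hA.of_card_edgeBoundary_le h (hc.mono ?_) ?_
  · exact compl_subset_compl.2 (inter_subset_left.trans subset_union_left)
  · have := G.card_edgeBoundary_inter_add_card_edgeBoundary_union_le A B
    have := hB.card_edgeBoundary_le _ (hB.nonempty.mono subset_union_right) hc
    omega

theorem sdiff (hA : G.IsFragment A) (hB : G.IsFragment B) (hAB : (A \ B).Nonempty)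
    (hBA : (B \ A).Nonempty) : G.IsFragment (A \ B) := by
  have hsub {X Y : Finset V} : X \ Y ⊆ (Y \ X)ᶜ := fun x hx ↦ by simp_all
  refine hA.of_card_edgeBoundary_le hAB (hBA.mono hsub) ?_
  have := G.card_edgeBoundary_sdiff_add_card_edgeBoundary_sdiff_le A B
  have := hB.card_edgeBoundary_le _ hBA (hAB.mono hsub)
  omega

theorem image (hA : G.IsFragment A) (φ : G ≃g G) : G.IsFragment (A.image φ) := by
  have hc {C : Finset V} (ψ : G ≃g G) (hC : Cᶜ.Nonempty) : (C.image ψ)ᶜ.Nonempty := by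
    obtain ⟨x, hx⟩ := hC
    exact ⟨ψ x, by simpa [ψ.injective.mem_finset_image] using hx⟩
  refine ⟨hA.nonempty.image φ, hc φ hA.compl_nonempty, fun C hC hCc ↦ ?_⟩
  calc #(G.edgeBoundary (A.image φ)) = #(G.edgeBoundary A) := card_edgeBoundary_image φ A
    _ ≤ #(G.edgeBoundary (C.image φ.symm)) :=
      hA.card_edgeBoundary_le _ (hC.image φ.symm) (hc φ.symm hCc)
    _ = #(G.edgeBoundary C) := card_edgeBoundary_image φ.symm C

end IsFragment

theorem IsAtom.subset (hA : G.IsAtom A) (hB : G.IsFragment B) (h : (A ∩ B).Nonempty) :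
    A ⊆ B := by
  by_cases hc : (A ∪ B)ᶜ.Nonempty
  · have := hA.card_le _ (hA.inter hB h hc)
    rw [← eq_of_subset_of_card_le inter_subset_left this]
    exact inter_subset_right
  · by_contra hAB
    have hBA : (B \ A).Nonempty := by
      rw [not_nonempty_iff_eq_empty, compl_eq_empty_iff] at hc
      obtain ⟨x, hx⟩ := hA.compl_nonempty
      rw [mem_compl] at hx
      exact ⟨x, mem_sdiff.2 ⟨(mem_union.1 (hc ▸ mem_univ x)).resolve_left hx, hx⟩⟩
    have := hA.card_le _ (hA.sdiff hB (sdiff_nonempty.2 hAB) hBA)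
    have := card_sdiff_add_card_inter A B
    have := h.card_pos
    omega

theorem IsRegularOfDegree.card_edgeBoundary_lt_card {k : ℕ} (hG : G.IsRegularOfDegree k)
    {A : Finset V} (hA : A.Nonempty) (h : #(G.edgeBoundary A) < k) :
    #(G.edgeBoundary A) < #A := by
  by_contra! hle
  have hout (v : V) (hv : v ∈ A) : k + 1 - #A ≤ #(G.neighborFinset v \ A) := by
    have hin : G.neighborFinset v ∩ A ⊆ A.erase v := fun w hw ↦ by
      rw [mem_inter, mem_neighborFinset] at hw
      exact mem_erase.2 ⟨hw.1.ne', hw.2⟩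
    have h₁ : #(G.neighborFinset v ∩ A) ≤ #A - 1 :=
      (card_le_card hin).trans_eq (card_erase_of_mem hv)
    have h₂ := card_inter_add_card_sdiff (G.neighborFinset v) A
    rw [card_neighborFinset_eq_degree, hG.degree_eq v] at h₂
    have := card_pos.2 ⟨v, hv⟩
    omega
  have hsum : #A * (k + 1 - #A) ≤ #(G.edgeBoundary A) := by
    rw [card_edgeBoundary_eq_sum, ← smul_eq_mul]
    exact card_nsmul_le_sum A _ _ hout
  have hpos := hA.card_pos
  obtain ⟨b, hb⟩ : ∃ b, k + 1 - #A = b + 2 := ⟨k - 1 - #A, by omega⟩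
  rw [hb] at hsum
  have : #A + b + 1 ≤ #A * (b + 2) := by nlinarith
  omega

theorem exists_neighborFinset_subset_of_card_edgeBoundary_lt {A : Finset V}
    (h : #(G.edgeBoundary A) < #A) : ∃ v ∈ A, G.neighborFinset v ⊆ A := by
  rw [card_edgeBoundary_eq_sum, card_eq_sum_ones] at h
  obtain ⟨v, hv, hlt⟩ := exists_lt_of_sum_lt h
  exact ⟨v, hv, sdiff_eq_empty_iff_subset.1 (card_eq_zero.1 (by omega))⟩

theorem IsRegularOfDegree.le_card_edgeBoundary {k : ℕ} (hreg : G.IsRegularOfDegree k)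
    (hconn : G.Preconnected) (hvt : VertexTransitive G) {B : Finset V} (hB : B.Nonempty)
    (hBc : Bᶜ.Nonempty) : k ≤ #(G.edgeBoundary B) := by
  have : Nontrivial V := by
    obtain ⟨x, hx⟩ := hB
    obtain ⟨y, hy⟩ := hBc
    exact nontrivial_of_ne x y (ne_of_mem_of_not_mem hx (mem_compl.1 hy))
  obtain ⟨A, hA⟩ := G.exists_isAtom
  refine le_trans ?_ (hA.card_edgeBoundary_le B hB hBc)
  by_contra! hlt
  obtain ⟨w, hwA, hw⟩ := exists_neighborFinset_subset_of_card_edgeBoundary_lt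
    (hreg.card_edgeBoundary_lt_card hA.nonempty hlt)
  obtain ⟨⟨u, v⟩, huv⟩ := hconn.edgeBoundary_nonempty hA.nonempty hA.compl_nonempty
  simp only [mem_edgeBoundary] at huv
  obtain ⟨hu, hv, huv⟩ := huv
  obtain ⟨φ, rfl⟩ := hvt w u
  have hφA : A = A.image φ :=
    eq_of_subset_of_card_le (hA.subset (hA.image φ) ⟨φ w, by simp [hu, hwA]⟩) card_image_le
  apply hv
  rw [hφA, ← φ.apply_symm_apply v]
  refine mem_image_of_mem φ (hw ?_)
  rwa [mem_neighborFinset, ← φ.map_adj_iff, φ.apply_symm_apply]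

theorem exists_card_edgeBoundary_le_of_not_connected [Nonempty V] {F : Finset (Sym2 V)}
    (h : ¬ (G.deleteEdges ↑F).Connected) :
    ∃ A : Finset V, A.Nonempty ∧ Aᶜ.Nonempty ∧ #(G.edgeBoundary A) ≤ #F := by
  classical
  obtain ⟨x, y, hxy⟩ : ∃ x y, ¬ (G.deleteEdges ↑F).Reachable x y := by
    by_contra! hall
    exact h ⟨hall⟩
  refine ⟨univ.filter ((G.deleteEdges ↑F).Reachable x), ⟨x, by simp⟩, ⟨y, by simpa using hxy⟩, ?_⟩
  refine card_le_card_of_injOn (fun p ↦ s(p.1, p.2)) (fun p hp ↦ ?_) (fun p hp q hq hpq ↦ ?_)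
  · simp only [mem_coe, mem_edgeBoundary, mem_filter, mem_univ, true_and] at hp
    by_contra hpF
    exact hp.2.1 (hp.1.trans (Adj.reachable (deleteEdges_adj.2 ⟨hp.2.2, hpF⟩)))
  · simp only [mem_coe, mem_edgeBoundary, mem_filter, mem_univ, true_and] at hp hq
    rcases Sym2.eq_iff.1 hpq with hpq | hpq
    · exact Prod.ext hpq.1 hpq.2
    · exact absurd (hpq.1 ▸ hp.1) hq.2.1

end SimpleGraph

section EdgeConnectivity

open SimpleGraph

theorem SimpleGraph.not_connected_deleteIncidenceSet [Nontrivial V] (G : SimpleGraph V) (v : V) :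
    ¬ (G.deleteIncidenceSet v).Connected := by
  intro h
  obtain ⟨w, hw⟩ := exists_ne v
  obtain ⟨p⟩ := h.preconnected v w
  cases p with
  | nil => exact hw rfl
  | cons hadj _ => exact (deleteIncidenceSet_adj.1 hadj).2.1 rfl

theorem edgeConnectivity_eq_zero_of_subsingleton [Subsingleton V] [Nonempty V]
    (G : SimpleGraph V) : edgeConnectivity G = 0 := by
  refine Nat.sInf_eq_zero.2 (Or.inr (Set.eq_empty_of_forall_notMem ?_))
  rintro n ⟨F, -, -, h⟩
  exact h IsTree.of_subsingleton.connected

variable [Fintype V] [DecidableEq V] (G : SimpleGraph V) [DecidableRel G.Adj]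

theorem SimpleGraph.exists_edgeCut_card_eq_degree [Nontrivial V] (v : V) :
    ∃ F : Finset (Sym2 V), ↑F ⊆ G.edgeSet ∧ #F = G.degree v ∧ ¬ (G.deleteEdges ↑F).Connected :=
  ⟨G.incidenceFinset v, by simpa using G.incidenceSet_subset v, card_incidenceFinset_eq_degree ..,
    by rw [coe_incidenceFinset]; exact G.not_connected_deleteIncidenceSet v⟩

theorem edgeConnectivity_le_degree [Nontrivial V] (v : V) : edgeConnectivity G ≤ G.degree v :=
  Nat.sInf_le (G.exists_edgeCut_card_eq_degree v)

variable {G} in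
theorem le_edgeConnectivity [Nontrivial V] {k : ℕ}
    (h : ∀ A : Finset V, A.Nonempty → Aᶜ.Nonempty → k ≤ #(G.edgeBoundary A)) :
    k ≤ edgeConnectivity G := by
  obtain ⟨v⟩ := ‹Nontrivial V›.to_nonempty
  refine le_csInf ⟨_, G.exists_edgeCut_card_eq_degree v⟩ ?_
  rintro n ⟨F, -, rfl, hdis⟩
  obtain ⟨A, hA, hAc, hAF⟩ := exists_card_edgeBoundary_le_of_not_connected hdis
  exact (h A hA hAc).trans hAF

end EdgeConnectivity

theorem stmt1 [Fintype V] (G : SimpleGraph V) (k : ℕ)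
    (hreg : GIsRegular G k) (hconn : G.Connected)
    (hvt : VertexTransitive G) :
    edgeConnectivity G = k := by
  classical
  have hk := hreg.isRegularOfDegree
  obtain ⟨v⟩ := hconn.nonempty
  rcases subsingleton_or_nontrivial V with hV | hV
  · have : Nonempty V := ⟨v⟩
    rw [← hk.degree_eq v, degree_eq_zero_of_subsingleton,
      edgeConnectivity_eq_zero_of_subsingleton]
  · refine le_antisymm (hk.degree_eq v ▸ edgeConnectivity_le_degree G v) ?_
    exact le_edgeConnectivity fun A hA hAc ↦ hk.le_card_edgeBoundary hconn.preconnected hvt hA hAc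
end

section
/- Let G be a non-bipartite connected vertex-transitive finite simple graph of even order, not isomorphic to K₄ or K₆, and let C be an odd cycle in G of minimum odd length with |C| ≥ |G|/2. Then every vertex of G not on C is adjacent to at most two vertices of C. -/
/-!
Suppose `v` has three neighbours `a`, `b`, `c` on `C`. They cut `C` into three arcs whose
lengths add up to the odd girth `g`, so at least one arc is odd, and an odd arc of length `ℓ`
closes up with `v` into an odd closed walk of length `ℓ + 2`; such a walk contains an odd cycle
that is no longer, whence `g ≤ ℓ + 2`. Parity then forces all three arcs to be single edges and
`g = 3`, so `{v, a, b, c}` is a `K₄` in a graph with at most six vertices. A regular graph in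
which a clique covers more than half of the vertices is complete (in the complement the clique
is an independent set, and double counting the edges leaving it kills the degree), so `G` is
`K₄` or `K₆`.
-/

open SimpleGraph

variable {V : Type*}

/-- The odd girth of `G`: the minimum length of an odd cycle. -/
noncomputable def oddGirth (G : SimpleGraph V) : ℕ :=
  sInf {n | Odd n ∧ ∃ (u : V) (c : G.Walk u u), c.IsCycle ∧ c.length = n}

namespace SimpleGraph

open Finset

variable {G : SimpleGraph V}

namespace Walk

theorem exists_isPath_or_exists_odd_isCycle {a b : V} (p : G.Walk a b) :
    (∃ q : G.Walk a b, q.IsPath ∧ q.length ≤ p.length ∧ Even (q.length + p.length)) ∨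
      ∃ (x : V) (c : G.Walk x x), c.IsCycle ∧ Odd c.length ∧ c.length ≤ p.length := by
  classical
  induction p with
  | nil => exact Or.inl ⟨nil, by simp, le_rfl, by simp⟩
  | @cons a c b h p ih =>
    rcases ih with ⟨q, hq, hqp, hpar⟩ | ⟨x, o, ho, hodd, hle⟩
    swap
    · exact Or.inr ⟨x, o, ho, hodd, by simp only [length_cons]; omega⟩
    by_cases ha : a ∈ q.support
    swap
    · exact Or.inl ⟨cons h q, hq.cons ha, by simp only [length_cons]; omega,
        by simp only [length_cons]; grind⟩
    -- `q` returns to `a`: split it there, into a path `t` closing a cycle with `h` and a path `r`.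
    have hsplit := congrArg length (q.take_spec ha)
    rw [length_append] at hsplit
    set t := q.takeUntil a ha
    set r := q.dropUntil a ha
    rcases Nat.even_or_odd t.length with ht | ht
    · have ht2 : 2 ≤ t.length := by
        rcases ht with ⟨k, hk⟩
        have : t.length ≠ 0 := fun h0 => h.ne (eq_of_length_eq_zero h0).symm
        omega
      have hcyc : (cons h t).IsCycle := by
        rw [cons_isCycle_iff]
        refine ⟨hq.takeUntil ha, fun he => ?_⟩
        have : t.length = 1 := (hq.takeUntil ha).length_eq_one_of_mem_edges (by rwa [Sym2.eq_swap])
        omega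
      exact Or.inr ⟨a, cons h t, hcyc, by simp only [length_cons]; exact ht.add_one,
        by simp only [length_cons]; omega⟩
    · exact Or.inl ⟨r, hq.dropUntil ha, by simp only [length_cons]; omega,
        by simp only [length_cons]; grind⟩

theorem exists_append_three_of_mem_support {a b c : V} (W : G.Walk a a) (hb : b ∈ W.support)
    (hc : c ∈ W.support) :
    ∃ (p : G.Walk a b) (q : G.Walk b c) (r : G.Walk c a),
      p.length + q.length + r.length = W.length := by
  classical
  have hW := W.take_spec hb
  rw [← hW, mem_support_append_iff] at hc
  have hlen := congrArg length hW
  rw [length_append] at hlen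
  rcases hc with hc | hc
  · have hsplit := congrArg length ((W.takeUntil b hb).take_spec hc)
    rw [length_append] at hsplit
    -- `c` lies between `a` and `b`: traverse `W` backwards.
    exact ⟨(W.dropUntil b hb).reverse, ((W.takeUntil b hb).dropUntil c hc).reverse,
      ((W.takeUntil b hb).takeUntil c hc).reverse, by simp only [length_reverse]; omega⟩
  · have hsplit := congrArg length ((W.dropUntil b hb).take_spec hc)
    rw [length_append] at hsplit
    exact ⟨W.takeUntil b hb, (W.dropUntil b hb).takeUntil c hc,
      (W.dropUntil b hb).dropUntil c hc, by omega⟩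

end Walk

theorem Walk.IsCycle.oddGirth_le_length {u : V} {c : G.Walk u u} (hc : c.IsCycle)
    (hodd : Odd c.length) : oddGirth G ≤ c.length := by
  unfold oddGirth
  exact Nat.sInf_le ⟨hodd, u, c, hc, rfl⟩

theorem oddGirth_le_length {u : V} (p : G.Walk u u) (hp : Odd p.length) :
    oddGirth G ≤ p.length := by
  rcases p.exists_isPath_or_exists_odd_isCycle with ⟨q, hq, -, hpar⟩ | ⟨x, c, hc, hodd, hle⟩
  · rw [Walk.length_eq_zero_iff.mpr (Walk.isPath_iff_nil.mp hq), zero_add] at hpar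
    exact absurd hpar (Nat.not_even_iff_odd.mpr hp)
  · exact (hc.oddGirth_le_length hodd).trans hle

theorem oddGirth_le_length_add_two {v a b : V} (hva : G.Adj v a) (hvb : G.Adj v b)
    (p : G.Walk a b) (hp : Odd p.length) : oddGirth G ≤ p.length + 2 := by
  simpa using oddGirth_le_length ((Walk.cons hva p).concat hvb.symm)
    (by simpa [add_assoc] using hp.add_even even_two)

theorem adj_of_mem_support_of_length_eq_oddGirth {v a b c : V} (W : G.Walk a a)
    (hW : W.length = oddGirth G) (hodd : Odd W.length) (hb : b ∈ W.support)
    (hc : c ∈ W.support) (hab : a ≠ b) (hbc : b ≠ c) (hca : c ≠ a)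
    (hva : G.Adj v a) (hvb : G.Adj v b) (hvc : G.Adj v c) :
    W.length = 3 ∧ G.Adj a b ∧ G.Adj b c ∧ G.Adj c a := by
  obtain ⟨p, q, r, hlen⟩ := W.exists_append_three_of_mem_support hb hc
  have arc : ∀ {x y : V} (s : G.Walk x y), G.Adj v x → G.Adj v y → x ≠ y →
      0 < s.length ∧ (s.length % 2 = 0 ∨ W.length ≤ s.length + 2) := by
    intro x y s hvx hvy hxy
    refine ⟨Nat.pos_of_ne_zero fun h => hxy (Walk.eq_of_length_eq_zero h), ?_⟩
    rcases Nat.even_or_odd s.length with h | h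
    · exact Or.inl (Nat.even_iff.mp h)
    · exact Or.inr (hW ▸ oddGirth_le_length_add_two hvx hvy s h)
  have hp := arc p hva hvb hab
  have hq := arc q hvb hvc hbc
  have hr := arc r hvc hva hca
  have hodd' := Nat.odd_iff.mp hodd
  have hp1 : p.length = 1 := by omega
  have hq1 : q.length = 1 := by omega
  have hr1 : r.length = 1 := by omega
  exact ⟨by omega, Walk.adj_of_length_eq_one hp1, Walk.adj_of_length_eq_one hq1,
    Walk.adj_of_length_eq_one hr1⟩

theorem VertexTransitive.isRegularOfDegree [G.LocallyFinite] (hG : VertexTransitive G) (v : V) :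
    G.IsRegularOfDegree (G.degree v) := fun w => by
  obtain ⟨φ, rfl⟩ := hG v w
  exact φ.degree_eq v

theorem IsRegularOfDegree.eq_zero_of_isIndepSet [Fintype V] [DecidableRel G.Adj] {d : ℕ}
    (hG : G.IsRegularOfDegree d) {s : Finset V} (hs : G.IsIndepSet s)
    (hcard : Fintype.card V < 2 * #s) : d = 0 := by
  classical
  have hcount : #s * d ≤ #sᶜ * d := by
    refine card_mul_le_card_mul G.Adj (fun x hx => ?_) (fun y _ => ?_)
    · rw [← hG x, ← card_neighborFinset_eq_degree]
      refine card_le_card fun y hy => ?_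
      rw [mem_neighborFinset] at hy
      exact (mem_bipartiteAbove G.Adj).mpr ⟨mem_compl.mpr fun hys => hs hx hys hy.ne hy, hy⟩
    · rw [← hG y, ← card_neighborFinset_eq_degree]
      refine card_le_card fun x hx => ?_
      exact (mem_neighborFinset ..).mpr ((mem_bipartiteBelow G.Adj).mp hx).2.symm
  rw [card_compl] at hcount
  by_contra hd
  have := Nat.le_of_mul_le_mul_right hcount (Nat.pos_of_ne_zero hd)
  omega

theorem IsRegularOfDegree.eq_top_of_isClique [Fintype V] [DecidableRel G.Adj] {d : ℕ}
    (hG : G.IsRegularOfDegree d) {s : Finset V} (hs : G.IsClique s)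
    (hcard : Fintype.card V < 2 * #s) : G = ⊤ := by
  classical
  have hcompl := hG.compl.eq_zero_of_isIndepSet (by simpa using hs) hcard
  ext x y
  refine ⟨fun h => h.ne, fun hxy => ?_⟩
  by_contra hnadj
  have := Gᶜ.degree_pos_iff_exists_adj x |>.mpr ⟨y, (compl_adj G x y).mpr ⟨hxy, hnadj⟩⟩
  rw [hG.compl x] at this
  omega

theorem nonempty_iso_top_of_eq_top [Fintype V] {n : ℕ} (hG : G = ⊤) (hn : Fintype.card V = n) :
    Nonempty (G ≃g (⊤ : SimpleGraph (Fin n))) := by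
  subst hG hn
  exact ⟨Iso.completeGraph (Fintype.equivFin V)⟩

end SimpleGraph

theorem stmt4_general [Fintype V] (G : SimpleGraph V)
    (hvt : VertexTransitive G)
    (heven : Even (Fintype.card V))
    (hK4 : IsEmpty (G ≃g (⊤ : SimpleGraph (Fin 4))))
    (hK6 : IsEmpty (G ≃g (⊤ : SimpleGraph (Fin 6))))
    (u : V) (C : G.Walk u u) (hCodd : Odd C.length)
    (hCmin : C.length = oddGirth G)
    (hClen : Fintype.card V ≤ 2 * C.length) :
    ∀ v : V, v ∉ C.support → ({w | w ∈ C.support ∧ G.Adj v w}).ncard ≤ 2 := by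
  classical
  intro v _
  by_contra! hgt
  obtain ⟨a, b, c, ⟨haC, hva⟩, ⟨hbC, hvb⟩, ⟨hcC, hvc⟩, hab, hac, hbc⟩ :=
    (Set.two_lt_ncard_iff (Set.toFinite _)).mp hgt
  obtain ⟨hlen, hab', hbc', hca'⟩ := adj_of_mem_support_of_length_eq_oddGirth (C.rotate a haC)
    (by simpa using hCmin) (by simpa using hCodd) (by simpa using hbC) (by simpa using hcC)
    hab hbc hac.symm hva hvb hvc
  rw [Walk.length_rotate] at hlen
  have hK : G.IsClique (({v, a, b, c} : Finset V) : Set V) := by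
    simp only [Finset.coe_insert, Finset.coe_singleton, isClique_insert, isClique_singleton,
      Set.mem_insert_iff, Set.mem_singleton_iff]
    grind [G.adj_symm]
  have hKcard : ({v, a, b, c} : Finset V).card = 4 := by
    rw [Finset.card_insert_of_notMem, Finset.card_insert_of_notMem, Finset.card_pair hbc]
    · simp [hab, hac]
    · simp [hva.ne, hvb.ne, hvc.ne]
  have h4 : 4 ≤ Fintype.card V := hKcard ▸ Finset.card_le_univ _
  have htop := (hvt.isRegularOfDegree v).eq_top_of_isClique hK (by omega)
  obtain h | h : Fintype.card V = 4 ∨ Fintype.card V = 6 := by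
    rw [Nat.even_iff] at heven
    omega
  · exact (nonempty_iso_top_of_eq_top htop h).elim hK4.false
  · exact (nonempty_iso_top_of_eq_top htop h).elim hK6.false

theorem stmt4 [Fintype V] (G : SimpleGraph V)
    (hconn : G.Connected) (hvt : VertexTransitive G)
    (hnb : ¬ G.Colorable 2) (heven : Even (Fintype.card V))
    (hK4 : IsEmpty (G ≃g (⊤ : SimpleGraph (Fin 4))))
    (hK6 : IsEmpty (G ≃g (⊤ : SimpleGraph (Fin 6))))
    (u : V) (C : G.Walk u u) (hC : C.IsCycle) (hCodd : Odd C.length)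
    (hCmin : C.length = oddGirth G)
    (hClen : Fintype.card V ≤ 2 * C.length) :
    ∀ v : V, v ∉ C.support → ({w | w ∈ C.support ∧ G.Adj v w}).ncard ≤ 2 :=
  stmt4_general G hvt heven hK4 hK6 u C hCodd hCmin hClen
end

section
/- Let G be a k-regular connected non-bipartite vertex-transitive finite simple graph of even order, and suppose V(G) is partitioned into S and its complement S̄ with |S| = |S̄| + 2 and S̄ an independent set. Then the odd girth of G is at least |V(G)|/2. -/
open SimpleGraph

variable {V : Type*}

/-!
Average over the automorphism group. By vertex-transitivity, the automorphic images of a shortest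
odd cycle `C` (of length `g`) meet `S̄` in `g |S̄| / n` vertices on average, so some image meets it
in at least that many. But `S̄` is independent, so an odd closed walk of length `g` visits it at
most `(g - 1) / 2` times. Hence `2 g |S̄| ≤ n (g - 1)`, which with `n = 2 |S̄| + 2` is `n ≤ 2 g`.
-/

open Finset

namespace MulAction

variable {H α : Type*} [Group H] [MulAction H α] [Fintype H] [Fintype α] [DecidableEq α]
  [IsPretransitive H α]

theorem card_mul_card_filter_smul_mem (T : Finset α) (x : α) :
    Fintype.card α * #{h : H | h • x ∈ T} = Fintype.card H * #T := by
  have hconst : ∀ y, #{h : H | h • y ∈ T} = #{h : H | h • x ∈ T} := by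
    intro y
    obtain ⟨g, rfl⟩ := exists_smul_eq H x y
    simp only [card_filter, smul_smul]
    exact Equiv.sum_comp (Equiv.mulRight g) (fun h ↦ if h • x ∈ T then 1 else 0)
  calc Fintype.card α * #{h : H | h • x ∈ T}
      = ∑ y : α, #{h : H | h • y ∈ T} := by simp [hconst]
    _ = ∑ h : H, ∑ y : α, if h • y ∈ T then 1 else 0 := by
        simp only [card_filter]; exact sum_comm
    _ = ∑ _h : H, #T := by
        refine sum_congr rfl fun h _ ↦ ?_
        exact (Equiv.sum_comp (toPerm h) (fun y ↦ if y ∈ T then 1 else 0)).trans (by simp)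
    _ = Fintype.card H * #T := by simp

theorem exists_card_mul_le_card_mul_card_filter_smul_mem {ι : Type*} (s : Finset ι)
    (f : ι → α) (T : Finset α) :
    ∃ h : H, #s * #T ≤ Fintype.card α * #{i ∈ s | h • f i ∈ T} := by
  have hsum : ∑ _h : H, #s * #T = ∑ h : H, Fintype.card α * #{i ∈ s | h • f i ∈ T} :=
    calc ∑ _h : H, #s * #T
        = ∑ i ∈ s, Fintype.card α * #{h : H | h • f i ∈ T} := by
          simp only [sum_const, card_univ, smul_eq_mul, card_mul_card_filter_smul_mem]; ring
      _ = ∑ h : H, Fintype.card α * #{i ∈ s | h • f i ∈ T} := by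
          simp only [← mul_sum, card_filter]; rw [sum_comm]
  obtain ⟨h, -, hh⟩ := exists_le_of_sum_le univ_nonempty hsum.le
  exact ⟨h, hh⟩

end MulAction

namespace SimpleGraph

variable {G : SimpleGraph V}

theorem exists_odd_length_walk_of_not_colorable_two (h : ¬ G.Colorable 2) :
    ∃ (u : V) (p : G.Walk u u), Odd p.length := by
  by_contra! heven
  apply h
  -- Colour each vertex by the parity of a walk to it from a fixed vertex of its component.
  let root (v : V) : V := (G.connectedComponentMk v).out
  have walkFromRoot (v : V) : G.Walk (root v) v :=
    (ConnectedComponent.exact (Quot.out_eq (G.connectedComponentMk v))).some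
  refine (Coloring.mk (fun v ↦ decide (Even (walkFromRoot v).length)) ?_).colorable
  intro a b hab hcol
  have hroot : root a = root b := by
    simp only [root, ConnectedComponent.connectedComponentMk_eq_of_adj hab]
  have hclosed := heven (root a)
    (((walkFromRoot a).append (.cons hab (walkFromRoot b).reverse)).copy rfl hroot.symm)
  simp only [Walk.length_copy, Walk.length_append, Walk.length_cons, Walk.length_reverse,
    Nat.not_odd_iff_even] at hclosed
  simp only [decide_eq_decide] at hcol
  grind

namespace Walk

theorem exists_eq_append_append_of_not_isPath [DecidableEq V] {a b : V} {q : G.Walk a b}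
    (hq : ¬ q.IsPath) : ∃ (x : V) (q₁ : G.Walk a x) (c : G.Walk x x) (q₂ : G.Walk x b),
      ¬ c.Nil ∧ q = q₁.append (c.append q₂) := by
  induction q with
  | nil => exact absurd .nil hq
  | @cons a a' b h q ih =>
    by_cases hq' : q.IsPath
    · have ha : a ∈ q.support := by
        by_contra ha
        exact hq ((cons_isPath_iff h q).mpr ⟨hq', ha⟩)
      refine ⟨a, nil, .cons h (q.takeUntil a ha), q.dropUntil a ha, not_nil_cons, ?_⟩
      rw [nil_append, cons_append, take_spec]
    · obtain ⟨x, q₁, c, q₂, hc, rfl⟩ := ih hq'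
      exact ⟨x, .cons h q₁, c, q₂, hc, rfl⟩

theorem exists_isCycle_odd_length_of_odd_length {u : V} (p : G.Walk u u) (hp : Odd p.length) :
    ∃ (v : V) (c : G.Walk v v), c.IsCycle ∧ Odd c.length := by
  classical
  induction hlen : p.length using Nat.strong_induction_on generalizing u with
  | _ n ih =>
  subst hlen
  cases p with
  | nil => simp at hp
  | @cons _ v _ h q =>
    by_cases hq : q.IsPath
    · refine ⟨u, .cons h q, isCycle_iff_isPath_tail_and_le_length.mpr ⟨by simpa using hq, ?_⟩,
        hp⟩
      cases q with
      | nil => exact absurd rfl h.ne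
      | cons _ q' =>
        cases q' with
        | nil => norm_num at hp
        | cons => simp
    · obtain ⟨x, q₁, c, q₂, hc, rfl⟩ := exists_eq_append_append_of_not_isPath hq
      have hc_pos : 0 < c.length := not_nil_iff_lt_length.mp hc
      simp only [length_cons, length_append] at hp ih
      -- `c` and `cons h (q₁.append q₂)` are shorter closed walks whose lengths add up to `p`'s.
      rcases Nat.even_or_odd c.length with hce | hco
      · exact ih _ (by simp only [length_cons, length_append]; omega) (.cons h (q₁.append q₂))
          (by simp only [length_cons, length_append]; grind) rfl
      · exact ih _ (by omega) c hco rfl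

theorem two_mul_card_filter_getVert_mem_le
    {s : Set V} [DecidablePred (· ∈ s)] (hs : G.IsIndepSet s) {u : V} (p : G.Walk u u) :
    2 * #{i ∈ range p.length | p.getVert i ∈ s} ≤ p.length := by
  set f : ℕ → ℕ := fun i ↦ if p.getVert i ∈ s then 1 else 0
  -- Each visit to `s` is counted by the steps on both sides of it; no step has both ends in `s`.
  have hstep : ∀ i ∈ range p.length, f i + f (i + 1) ≤ 1 := by
    intro i hi
    have hadj := p.adj_getVert_succ (mem_range.mp hi)
    by_cases h₀ : p.getVert i ∈ s <;> by_cases h₁ : p.getVert (i + 1) ∈ s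
    · exact absurd hadj (hs h₀ h₁ hadj.ne)
    all_goals simp [f, h₀, h₁]
  have hshift : ∑ i ∈ range p.length, f (i + 1) = ∑ i ∈ range p.length, f i := by
    have := sum_range_succ f p.length
    rw [sum_range_succ'] at this
    simp only [f, getVert_length, getVert_zero] at this ⊢
    omega
  calc 2 * #{i ∈ range p.length | p.getVert i ∈ s}
      = ∑ i ∈ range p.length, (f i + f (i + 1)) := by
        rw [sum_add_distrib, hshift, card_filter]; ring
    _ ≤ ∑ _i ∈ range p.length, 1 := sum_le_sum hstep
    _ = p.length := by simp

end Walk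

theorem oddGirth_spec (h : ¬ G.Colorable 2) :
    Odd (oddGirth G) ∧ ∃ (u : V) (c : G.Walk u u), c.IsCycle ∧ c.length = oddGirth G := by
  obtain ⟨u, p, hp⟩ := exists_odd_length_walk_of_not_colorable_two h
  obtain ⟨v, c, hc, hco⟩ := p.exists_isCycle_odd_length_of_odd_length hp
  have hne : {n | Odd n ∧ ∃ (u : V) (c : G.Walk u u), c.IsCycle ∧ c.length = n}.Nonempty :=
    ⟨c.length, hco, v, c, hc, rfl⟩
  exact Nat.sInf_mem hne

end SimpleGraph

theorem stmt6_general [Fintype V] (G : SimpleGraph V)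
    (hvt : VertexTransitive G) (hnb : ¬ G.Colorable 2)
    (S : Set V)
    (hind : ∀ a ∈ Sᶜ, ∀ b ∈ Sᶜ, ¬ G.Adj a b)
    (hcard : S.ncard = Sᶜ.ncard + 2) :
    Fintype.card V ≤ 2 * oddGirth G := by
  classical
  obtain ⟨hodd, u, c, -, hc⟩ := oddGirth_spec hnb
  have : MulAction.IsPretransitive (G ≃g G) V := ⟨hvt⟩
  have : Fintype (G ≃g G) :=
    have : Finite (G ≃g G) := .of_injective _ DFunLike.coe_injective
    .ofFinite _
  set T := Sᶜ.toFinset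
  have hTS : (T : Set V) = Sᶜ := Set.coe_toFinset _
  have hT : G.IsIndepSet (T : Set V) := fun a ha b hb _ ↦
    hind a (hTS ▸ ha) b (hTS ▸ hb)
  have hsize : Fintype.card V = 2 * #T + 2 := by
    have := S.ncard_add_ncard_compl
    rw [Nat.card_eq_fintype_card, hcard, ← hTS, Set.ncard_coe_finset] at this
    omega
  obtain ⟨φ, hφ⟩ := MulAction.exists_card_mul_le_card_mul_card_filter_smul_mem
    (H := G ≃g G) (range c.length) c.getVert T
  have hindep := (c.map φ.toHom).two_mul_card_filter_getVert_mem_le hT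
  simp only [Walk.length_map, Walk.getVert_map, Iso.toHom, Embedding.coe_toHom,
    RelIso.coe_toRelEmbedding, mem_coe, card_range, RelIso.smul_def] at hindep hφ
  rw [hc] at hindep hφ
  set k := #{i ∈ range (oddGirth G) | φ (c.getVert i) ∈ T}
  obtain ⟨m, hm⟩ := hodd
  have hk : k ≤ m := by omega
  rw [hm, hsize] at hφ
  nlinarith [Nat.mul_le_mul_left (2 * #T + 2) hk]

theorem stmt6 [Fintype V] (G : SimpleGraph V) (k : ℕ)
    (hreg : GIsRegular G k) (hconn : G.Connected)
    (hvt : VertexTransitive G) (hnb : ¬ G.Colorable 2)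
    (heven : Even (Fintype.card V)) (S : Set V)
    (hind : ∀ a ∈ Sᶜ, ∀ b ∈ Sᶜ, ¬ G.Adj a b)
    (hcard : S.ncard = Sᶜ.ncard + 2) :
    Fintype.card V ≤ 2 * oddGirth G :=
  stmt6_general G hvt hnb S hind hcard
end

section
/- The Petersen graph has a matching preclusion set of size 3 that is not the set of edges incident to a single vertex; consequently, the Petersen graph is not super matched. -/
open SimpleGraph

variable {V : Type*}

/-- The Petersen graph, realized as the Kneser graph `K(5,2)`. -/
def petersenGraph : SimpleGraph {s : Finset (Fin 5) // s.card = 2} where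
  Adj x y := Disjoint x.1 y.1
  symm := ⟨fun _ _ h => h.symm⟩
  loopless := ⟨by
    intro x h
    have h1 : x.1 = ∅ := (Finset.disjoint_self_iff_empty _).mp h
    have h2 := x.2
    simp [h1] at h2⟩

/-- `G` is super matched: its matching preclusion number equals its minimum degree
and every optimal matching preclusion set is the star of a vertex. -/
def SuperMatched {V : Type*} (G : SimpleGraph V) : Prop :=
  mpNumber G = minDeg G ∧
  ∀ F : Finset (Sym2 V), IsMPSet G F → F.card = mpNumber G →
    ∃ v : V, ↑F = G.incidenceSet v


/-!
Delete from the Petersen graph `K(5,2)` the three edges joining complementary pairs of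
`{0,1,2,3}`. These edges form a matching, so they are not a star. Afterwards the six pairs inside
`{0,1,2,3}` are independent, and so are the four pairs containing `4`; every remaining edge
therefore meets one of the four vertices containing `4`, and a perfect matching would pair off
ten vertices using at most four edges. As the Petersen graph is cubic, super matchedness would
force this preclusion set of size 3 to be a star.
-/

namespace SimpleGraph

variable {V : Type*}

theorem ncard_neighborSet_eq_degree (G : SimpleGraph V) [Fintype V] [DecidableRel G.Adj]
    (v : V) : (G.neighborSet v).ncard = G.degree v := by
  rw [← Nat.card_coe_set_eq, Nat.card_eq_fintype_card, card_neighborSet_eq_degree]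

theorem IsRegularOfDegree.minDeg_eq {G : SimpleGraph V} [Fintype V] [DecidableRel G.Adj]
    [Nonempty V] {d : ℕ} (h : G.IsRegularOfDegree d) : minDeg G = d := by
  have hdeg : {n | ∃ v : V, (G.neighborSet v).ncard = n} = {d} := by
    ext n
    simp [ncard_neighborSet_eq_degree, h.degree_eq, eq_comm]
  rw [minDeg, hdeg, csInf_singleton]

/-- `S` and its image under the involution given by the matching exhaust the vertices. -/
theorem HasPerfectMatching.card_le_two_mul [Fintype V] {G : SimpleGraph V}
    (h : HasPerfectMatching G) (S : Finset V) (hS : ∀ v w, G.Adj v w → v ∈ S ∨ w ∈ S) :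
    Fintype.card V ≤ 2 * S.card := by
  classical
  obtain ⟨M, hM⟩ := h
  choose f hf using fun v => Subgraph.isPerfectMatching_iff.mp hM v
  have hff : ∀ v, f (f v) = v := fun v => ((hf (f v)).2 v (hf v).1.symm).symm
  have hcover : Finset.univ ⊆ S ∪ S.image f := by
    intro v _
    rcases hS v (f v) (M.adj_sub (hf v).1) with hv | hv
    · exact Finset.mem_union_left _ hv
    · exact Finset.mem_union_right _ (Finset.mem_image.mpr ⟨f v, hv, hff v⟩)
  calc Fintype.card V = Finset.univ.card := Finset.card_univ.symm
    _ ≤ (S ∪ S.image f).card := Finset.card_le_card hcover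
    _ ≤ S.card + (S.image f).card := Finset.card_union_le _ _
    _ ≤ 2 * S.card := by linarith [Finset.card_image_le (s := S) (f := f)]

theorem not_exists_eq_incidenceSet_of_disjoint (G : SimpleGraph V) {E : Set (Sym2 V)}
    {e₁ e₂ : Sym2 V} (h₁ : e₁ ∈ E) (h₂ : e₂ ∈ E) (hdisj : ∀ v ∈ e₁, v ∉ e₂) :
    ¬ ∃ v, E = G.incidenceSet v := by
  rintro ⟨v, rfl⟩
  exact hdisj v h₁.2 h₂.2

end SimpleGraph

open SimpleGraph

instance : DecidableRel petersenGraph.Adj := fun x y =>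
  inferInstanceAs (Decidable (Disjoint x.1 y.1))

def petersenVertex (a b : Fin 5) (h : a ≠ b := by decide) :
    {s : Finset (Fin 5) // s.card = 2} :=
  ⟨{a, b}, Finset.card_pair h⟩

instance : Nonempty {s : Finset (Fin 5) // s.card = 2} :=
  ⟨petersenVertex 0 1⟩

def petersenComplementaryPairs : Finset (Sym2 {s : Finset (Fin 5) // s.card = 2}) :=
  {s(petersenVertex 0 1, petersenVertex 2 3), s(petersenVertex 0 2, petersenVertex 1 3),
    s(petersenVertex 0 3, petersenVertex 1 2)}

theorem petersenGraph_isRegularOfDegree : petersenGraph.IsRegularOfDegree 3 := by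
  unfold IsRegularOfDegree
  decide

theorem petersenComplementaryPairs_subset_edgeSet :
    ↑petersenComplementaryPairs ⊆ petersenGraph.edgeSet := by
  intro e he
  simp only [petersenComplementaryPairs, Finset.coe_insert, Finset.coe_singleton,
    Set.mem_insert_iff, Set.mem_singleton_iff] at he
  rcases he with rfl | rfl | rfl <;> exact (mem_edgeSet _).mpr (by decide)

theorem four_mem_of_adj_deleteEdges_petersenComplementaryPairs
    (v w : {s : Finset (Fin 5) // s.card = 2})
    (h : (petersenGraph.deleteEdges ↑petersenComplementaryPairs).Adj v w) :
    4 ∈ v.1 ∨ 4 ∈ w.1 := by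
  rw [deleteEdges_adj, Finset.mem_coe] at h
  revert v w
  decide

theorem isMPSet_petersenComplementaryPairs :
    IsMPSet petersenGraph petersenComplementaryPairs := by
  refine ⟨petersenComplementaryPairs_subset_edgeSet, fun h => ?_⟩
  have hcover := h.card_le_two_mul (Finset.univ.filter fun v => 4 ∈ v.1)
    (by simpa using four_mem_of_adj_deleteEdges_petersenComplementaryPairs)
  exact absurd hcover (by decide)

theorem petersenComplementaryPairs_not_star :
    ¬ ∃ v, ↑petersenComplementaryPairs = petersenGraph.incidenceSet v :=
  petersenGraph.not_exists_eq_incidenceSet_of_disjoint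
    (e₁ := s(petersenVertex 0 1, petersenVertex 2 3))
    (e₂ := s(petersenVertex 0 2, petersenVertex 1 3))
    (by simp [petersenComplementaryPairs]) (by simp [petersenComplementaryPairs]) (by decide)

theorem stmt11 :
    (∃ F : Finset (Sym2 {s : Finset (Fin 5) // s.card = 2}),
      IsMPSet petersenGraph F ∧ F.card = 3 ∧
      ¬ ∃ v, ↑F = petersenGraph.incidenceSet v) ∧
    ¬ SuperMatched petersenGraph := by
  have hcard : petersenComplementaryPairs.card = 3 := by decide
  refine ⟨⟨petersenComplementaryPairs, isMPSet_petersenComplementaryPairs, hcard,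
    petersenComplementaryPairs_not_star⟩, ?_⟩
  rintro ⟨hmp, hstar⟩
  refine petersenComplementaryPairs_not_star
    (hstar _ isMPSet_petersenComplementaryPairs ?_)
  rw [hmp, petersenGraph_isRegularOfDegree.minDeg_eq, hcard]
end

section
/- The folded k-cube graph FQ_k is super matched if and only if k ≥ 4. -/
open SimpleGraph

variable {V : Type*}

/-- The folded `k`-cube: the hypercube `Q_{k-1}` together with edges between
antipodal pairs of vertices. -/
def foldedCube (k : ℕ) : SimpleGraph (Fin (k - 1) → Bool) where
  Adj x y := (∃! i, x i ≠ y i) ∨ (x ≠ y ∧ ∀ i, x i ≠ y i)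
  symm := by
    constructor
    rintro x y (⟨i, hi, hu⟩ | ⟨hne, hall⟩)
    · exact Or.inl ⟨i, Ne.symm hi, fun j hj => hu j (Ne.symm hj)⟩
    · exact Or.inr ⟨hne.symm, fun i => (hall i).symm⟩
  loopless := by
    constructor
    rintro x (⟨i, hi, _⟩ | ⟨hne, _⟩)
    · exact hi rfl
    · exact hne rfl

/-!
Identify `FQ_k` with the Cayley graph of the group `(Fin (k - 1) → Bool, ∆)` whose connection
set `S` consists of the `k - 1` unit vectors and the all-ones vector. For `s ∈ S` the map
`x ↦ x ∆ s` is a perfect matching, and these `k` matchings partition the edges, so a matching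
preclusion set needs an edge of every label `s`, while a vertex star shows that `k` edges suffice.
An optimal preclusion set `F` thus has exactly one edge of each label, and any two of its edges
meet: for disjoint edges labelled `s` and `t`, using `x ↦ x ∆ t` on the `4`-cycle through the
first edge and `x ↦ x ∆ s` elsewhere gives a perfect matching avoiding `F`. Four or more pairwise
intersecting edges form a star, so for `k ≥ 4` the set `F` is a star. For `k = 3`, `FQ_3 ≅ K_4`
and a triangle is an optimal preclusion set that is not a star.
-/

open Function

lemma Function.Involutive.piecewise {σ τ : V → V} (hσ : Involutive σ) (hτ : Involutive τ)
    {A : Set V} [DecidablePred (· ∈ A)] (hσA : ∀ z, σ z ∈ A → z ∈ A)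
    (hτA : ∀ z, z ∈ A → τ z ∈ A) : Involutive (A.piecewise τ σ) := by
  intro z
  by_cases hz : z ∈ A
  · rw [A.piecewise_eq_of_mem _ _ hz, A.piecewise_eq_of_mem _ _ (hτA z hz), hτ]
  · rw [A.piecewise_eq_of_notMem _ _ hz,
      A.piecewise_eq_of_notMem _ _ (mt (hσA z) hz), hσ]

lemma hasPerfectMatching_of_involutive {G : SimpleGraph V} {σ : V → V} (hσ : Involutive σ)
    (hadj : ∀ x, G.Adj x (σ x)) : HasPerfectMatching G := by
  let H : SimpleGraph V :=
    { Adj x y := σ x = y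
      symm := ⟨fun x y h => h ▸ hσ x⟩
      loopless := ⟨fun x h => (hadj x).ne h.symm⟩ }
  refine ⟨toSubgraph H fun x y h => h ▸ hadj x, ?_⟩
  rw [Subgraph.isPerfectMatching_iff]
  exact fun x => ⟨σ x, rfl, fun _ h => Eq.symm h⟩

lemma not_hasPerfectMatching_of_adj_imp_eq {G : SimpleGraph V} {a b d : V} (hab : a ≠ b)
    (ha : ∀ w, G.Adj a w → w = d) (hb : ∀ w, G.Adj b w → w = d) : ¬ HasPerfectMatching G := by
  rintro ⟨M, hM⟩
  rw [Subgraph.isPerfectMatching_iff] at hM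
  obtain ⟨x, hax, -⟩ := hM a
  obtain ⟨y, hby, -⟩ := hM b
  rw [ha x (M.adj_sub hax)] at hax
  rw [hb y (M.adj_sub hby)] at hby
  obtain ⟨z, -, hz⟩ := hM d
  exact hab ((hz a hax.symm).trans (hz b hby.symm).symm)

lemma isMPSet_of_coe_eq_incidenceSet {G : SimpleGraph V} {F : Finset (Sym2 V)} {v : V}
    (hF : ↑F = G.incidenceSet v) : IsMPSet G F := by
  refine ⟨hF ▸ G.incidenceSet_subset v, ?_⟩
  rintro ⟨M, hM⟩
  obtain ⟨w, hvw, -⟩ := Subgraph.isPerfectMatching_iff.1 hM v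
  have hvw' := M.adj_sub hvw
  rw [deleteEdges_adj, hF] at hvw'
  exact hvw'.2 ⟨hvw'.1, Sym2.mem_mk_left v w⟩

lemma mpNumber_eq_of_forall_le {G : SimpleGraph V} {n : ℕ}
    (hle : ∀ F, IsMPSet G F → n ≤ F.card) (hex : ∃ F, IsMPSet G F ∧ F.card = n) :
    mpNumber G = n :=
  le_antisymm (Nat.sInf_le hex) (le_csInf ⟨n, hex⟩ fun _ ⟨F, hF, hn⟩ => hn ▸ hle F hF)

lemma minDeg_eq_of_forall_ncard {G : SimpleGraph V} [Nonempty V] {d : ℕ}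
    (h : ∀ v, (G.neighborSet v).ncard = d) : minDeg G = d := by
  have : {d' | ∃ v, (G.neighborSet v).ncard = d'} = {d} := by
    ext d'
    simp [h, eq_comm]
  rw [minDeg, this, csInf_singleton]

lemma Sym2.exists_forall_mem_of_pairwise_meet {α : Type*} {F : Finset (Sym2 α)}
    (hcard : 4 ≤ F.card) (hF : ∀ e ∈ F, ¬ e.IsDiag)
    (hmeet : (F : Set (Sym2 α)).Pairwise fun e e' => ∃ v, v ∈ e ∧ v ∈ e') :
    ∃ v, ∀ e ∈ F, v ∈ e := by
  classical
  obtain ⟨e₁, he₁, e₂, he₂, hne⟩ := Finset.one_lt_card.1 (by omega : 1 < F.card)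
  obtain ⟨v, hv₁, hv₂⟩ := hmeet he₁ he₂ hne
  obtain ⟨a, rfl⟩ := Sym2.mem_iff_exists.1 hv₁
  obtain ⟨b, rfl⟩ := Sym2.mem_iff_exists.1 hv₂
  have hab : a ≠ b := by rintro rfl; exact hne rfl
  have hva : v ≠ a := fun h => hF _ he₁ (Sym2.mk_isDiag_iff.2 h)
  have hvb : v ≠ b := fun h => hF _ he₂ (Sym2.mk_isDiag_iff.2 h)
  have hv_ab : v ∉ s(a, b) := by simp [hva, hvb]
  -- An edge missing `v` meets `s(v, a)` in `a` and `s(v, b)` in `b`.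
  have h_of_notMem : ∀ e ∈ F, v ∉ e → e = s(a, b) := by
    intro e he hve
    obtain ⟨x, hx, hxe⟩ := hmeet he₁ he (by rintro rfl; simp at hve)
    obtain ⟨y, hy, hye⟩ := hmeet he₂ he (by rintro rfl; simp at hve)
    rw [Sym2.mem_iff] at hx hy
    rcases hx with rfl | rfl
    · exact absurd hxe hve
    rcases hy with rfl | rfl
    · exact absurd hye hve
    exact ((Sym2.mem_and_mem_iff hab).1 ⟨hxe, hye⟩)
  refine ⟨v, fun e he => by_contra fun hve => ?_⟩
  have hab_mem : s(a, b) ∈ F := h_of_notMem e he hve ▸ he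
  obtain ⟨f, hf, hf'⟩ := Finset.exists_mem_notMem_of_card_lt_card
    (s := {s(v, a), s(v, b), s(a, b)}) (t := F) (Finset.card_le_three.trans_lt (by omega))
  simp only [Finset.mem_insert, Finset.mem_singleton, not_or] at hf'
  obtain ⟨hfa, hfb, hfab⟩ := hf'
  obtain ⟨c, rfl⟩ := Sym2.mem_iff_exists.1 (by_contra fun h => hfab (h_of_notMem _ hf h) : v ∈ f)
  obtain ⟨x, hx, hxab⟩ := hmeet hf hab_mem hfab
  rcases Sym2.mem_iff.1 hx with rfl | rfl
  · exact hv_ab hxab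
  · rcases Sym2.mem_iff.1 hxab with rfl | rfl
    · exact hfa rfl
    · exact hfb rfl

open scoped symmDiff

lemma symmDiff_eq_iff_eq_symmDiff {α : Type*} [GeneralizedBooleanAlgebra α] {a b c : α} :
    a ∆ b = c ↔ a = c ∆ b := by
  rw [← symmDiff_left_inj (b := b), symmDiff_symmDiff_cancel_right]

section SymmDiffCayley

variable {W : Type*} [GeneralizedBooleanAlgebra W]

def symmDiffCayley (S : Finset W) : SimpleGraph W where
  Adj x y := x ≠ y ∧ x ∆ y ∈ S
  symm := ⟨fun x y h => ⟨h.1.symm, symmDiff_comm x y ▸ h.2⟩⟩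
  loopless := ⟨fun _ h => h.1 rfl⟩

def edgeLabel : Sym2 W → W := Sym2.lift ⟨(· ∆ ·), symmDiff_comm⟩

@[simp] lemma edgeLabel_mk (x y : W) : edgeLabel s(x, y) = x ∆ y := rfl

lemma symmDiff_edgeLabel_mem_iff {e : Sym2 W} {z : W} : z ∆ edgeLabel e ∈ e ↔ z ∈ e := by
  induction e using Sym2.ind with
  | _ x y =>
    rw [edgeLabel_mk, Sym2.mem_iff, Sym2.mem_iff, symmDiff_eq_iff_eq_symmDiff,
      symmDiff_eq_iff_eq_symmDiff, symmDiff_symmDiff_cancel_left, symmDiff_left_comm,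
      symmDiff_self, symmDiff_bot]
    exact or_comm

variable {S : Finset W}

lemma edgeLabel_mem_of_mem_edgeSet {e : Sym2 W} (he : e ∈ (symmDiffCayley S).edgeSet) :
    edgeLabel e ∈ S := by
  induction e using Sym2.ind with
  | _ x y => exact he.2

lemma adj_symmDiff (hS : ⊥ ∉ S) {s : W} (hs : s ∈ S) (x : W) :
    (symmDiffCayley S).Adj x (x ∆ s) :=
  ⟨fun h => hS (symmDiff_eq_left.1 h.symm ▸ hs), by rwa [symmDiff_symmDiff_cancel_left]⟩

lemma neighborSet_symmDiffCayley (hS : ⊥ ∉ S) (v : W) :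
    (symmDiffCayley S).neighborSet v = (v ∆ ·) '' S := by
  ext y
  constructor
  · rintro ⟨-, hy⟩
    exact ⟨v ∆ y, hy, symmDiff_symmDiff_cancel_left v y⟩
  · rintro ⟨s, hs, rfl⟩
    exact adj_symmDiff hS hs v

lemma incidenceSet_symmDiffCayley (hS : ⊥ ∉ S) (v : W) :
    (symmDiffCayley S).incidenceSet v = (fun s => s(v, v ∆ s)) '' S := by
  ext e
  constructor
  · rintro ⟨he, hv⟩
    obtain ⟨y, rfl⟩ := Sym2.mem_iff_exists.1 hv
    exact ⟨v ∆ y, he.2, by simp⟩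
  · rintro ⟨s, hs, rfl⟩
    exact ⟨adj_symmDiff hS hs v, Sym2.mem_mk_left _ _⟩

lemma ncard_neighborSet_symmDiffCayley (hS : ⊥ ∉ S) (v : W) :
    ((symmDiffCayley S).neighborSet v).ncard = S.card := by
  rw [neighborSet_symmDiffCayley hS, Set.ncard_image_of_injective _ (symmDiff_right_injective v),
    Set.ncard_coe_finset]

lemma ncard_incidenceSet_symmDiffCayley (hS : ⊥ ∉ S) (v : W) :
    ((symmDiffCayley S).incidenceSet v).ncard = S.card := by
  have hinj : Function.Injective fun s => s(v, v ∆ s) := fun s t h => by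
    simpa using congrArg edgeLabel h
  rw [incidenceSet_symmDiffCayley hS, Set.ncard_image_of_injective _ hinj, Set.ncard_coe_finset]

lemma minDeg_symmDiffCayley (hS : ⊥ ∉ S) : minDeg (symmDiffCayley S) = S.card :=
  have : Nonempty W := ⟨⊥⟩
  minDeg_eq_of_forall_ncard (ncard_neighborSet_symmDiffCayley hS)

lemma exists_mem_edgeLabel_eq_of_isMPSet (hS : ⊥ ∉ S) {F : Finset (Sym2 W)}
    (hF : IsMPSet (symmDiffCayley S) F) {s : W} (hs : s ∈ S) : ∃ e ∈ F, edgeLabel e = s := by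
  by_contra! h
  refine hF.2 (hasPerfectMatching_of_involutive (symmDiff_left_involutive s) fun x => ?_)
  exact deleteEdges_adj.2 ⟨adj_symmDiff hS hs x, fun hx =>
    h _ hx (symmDiff_symmDiff_cancel_left x s)⟩

lemma card_le_card_image_edgeLabel [DecidableEq W] (hS : ⊥ ∉ S) {F : Finset (Sym2 W)}
    (hF : IsMPSet (symmDiffCayley S) F) : S.card ≤ (F.image edgeLabel).card :=
  Finset.card_le_card fun _ hs =>
    let ⟨e, he, hes⟩ := exists_mem_edgeLabel_eq_of_isMPSet hS hF hs
    Finset.mem_image.2 ⟨e, he, hes⟩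

lemma mpNumber_symmDiffCayley (hS : ⊥ ∉ S) : mpNumber (symmDiffCayley S) = S.card := by
  classical
  refine mpNumber_eq_of_forall_le (fun F hF => ?_) ?_
  · exact (card_le_card_image_edgeLabel hS hF).trans Finset.card_image_le
  · have hfin : ((symmDiffCayley S).incidenceSet ⊥).Finite := by
      rw [incidenceSet_symmDiffCayley hS]
      exact S.finite_toSet.image _
    obtain ⟨F, hF⟩ := hfin.exists_finset_coe
    refine ⟨F, isMPSet_of_coe_eq_incidenceSet hF, ?_⟩
    rw [← Set.ncard_coe_finset, hF, ncard_incidenceSet_symmDiffCayley hS]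

/-- Match `z` with `z ∆ t` on the `4`-cycle `A` through `e` and with `z ∆ s` off it: the only
`s`-edge of `F` lies inside `A`, and the only `t`-edge would have to meet `e`. -/
lemma hasPerfectMatching_deleteEdges_of_not_meet (hS : ⊥ ∉ S) {F : Finset (Sym2 W)}
    (hFG : ↑F ⊆ (symmDiffCayley S).edgeSet) (hinj : Set.InjOn edgeLabel (F : Set (Sym2 W)))
    {e e' : Sym2 W} (he : e ∈ F) (he' : e' ∈ F) (hdisj : ∀ v ∈ e, v ∉ e') :
    HasPerfectMatching ((symmDiffCayley S).deleteEdges F) := by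
  classical
  set s := edgeLabel e
  set t := edgeLabel e'
  let A : Set W := {z | z ∈ e ∨ z ∆ t ∈ e}
  have hA_s : ∀ z, z ∆ s ∈ A ↔ z ∈ A := fun z => by
    simp only [A, Set.mem_ofPred_eq, symmDiff_right_comm z s t, s, symmDiff_edgeLabel_mem_iff]
  have hA_t : ∀ z, z ∆ t ∈ A ↔ z ∈ A := fun z => by
    simp only [A, Set.mem_ofPred_eq, symmDiff_symmDiff_cancel_right, or_comm]
  refine hasPerfectMatching_of_involutive ((symmDiff_left_involutive s).piecewise
    (symmDiff_left_involutive t) (fun z => (hA_s z).1) (fun z => (hA_t z).2)) fun z => ?_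
  by_cases hz : z ∈ A
  · rw [A.piecewise_eq_of_mem _ _ hz]
    refine deleteEdges_adj.2 ⟨adj_symmDiff hS (edgeLabel_mem_of_mem_edgeSet (hFG he')) z,
      fun hzF => ?_⟩
    have hze : s(z, z ∆ t) = e' := hinj hzF he' (by simp [t])
    rcases hz with hz | hz
    · exact hdisj z hz (hze ▸ Sym2.mem_mk_left _ _)
    · exact hdisj _ hz (hze ▸ Sym2.mem_mk_right _ _)
  · rw [A.piecewise_eq_of_notMem _ _ hz]
    refine deleteEdges_adj.2 ⟨adj_symmDiff hS (edgeLabel_mem_of_mem_edgeSet (hFG he)) z,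
      fun hzF => hz (Or.inl ?_)⟩
    rw [← hinj hzF he (by simp [s])]
    exact Sym2.mem_mk_left _ _

lemma IsMPSet.pairwise_meet_of_card_eq (hS : ⊥ ∉ S) {F : Finset (Sym2 W)}
    (hF : IsMPSet (symmDiffCayley S) F) (hcard : F.card = S.card) :
    (F : Set (Sym2 W)).Pairwise fun e e' => ∃ v, v ∈ e ∧ v ∈ e' := by
  classical
  have hinj : Set.InjOn edgeLabel (F : Set (Sym2 W)) := Finset.injOn_of_card_image_eq <|
    le_antisymm Finset.card_image_le (hcard ▸ card_le_card_image_edgeLabel hS hF)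
  intro e he e' he' _
  by_contra! hdisj
  exact hF.2 (hasPerfectMatching_deleteEdges_of_not_meet hS hF.1 hinj he he' hdisj)

theorem superMatched_symmDiffCayley (hS : ⊥ ∉ S) (hcard : 4 ≤ S.card) :
    SuperMatched (symmDiffCayley S) := by
  refine ⟨(mpNumber_symmDiffCayley hS).trans (minDeg_symmDiffCayley hS).symm,
    fun F hF hFcard => ?_⟩
  rw [mpNumber_symmDiffCayley hS] at hFcard
  obtain ⟨v, hv⟩ := Sym2.exists_forall_mem_of_pairwise_meet (hFcard ▸ hcard)
    (fun e he => not_isDiag_of_mem_edgeSet _ (hF.1 he)) (hF.pairwise_meet_of_card_eq hS hFcard)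
  refine ⟨v, Set.eq_of_subset_of_ncard_le (fun e he => ⟨hF.1 he, hv e he⟩) ?_ ?_⟩
  · rw [ncard_incidenceSet_symmDiffCayley hS, Set.ncard_coe_finset, hFcard]
  · rw [incidenceSet_symmDiffCayley hS]
    exact S.finite_toSet.image _

end SymmDiffCayley

section FoldedCube

def cubeAtom {n : ℕ} (i : Fin n) : Fin n → Bool := fun j => decide (j = i)

def foldedCubeGenerators (n : ℕ) : Finset (Fin n → Bool) :=
  insert ⊤ (Finset.univ.image cubeAtom)

lemma cubeAtom_eq_iff {n : ℕ} {i : Fin n} {x : Fin n → Bool} :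
    cubeAtom i = x ↔ ∀ j, x j = true ↔ j = i := by
  simp only [cubeAtom, funext_iff]
  exact forall_congr' fun j => by cases x j <;> simp [eq_comm]

lemma foldedCube_eq_symmDiffCayley (k : ℕ) :
    foldedCube k = symmDiffCayley (foldedCubeGenerators (k - 1)) := by
  ext x y
  have hxy : ∀ j, (x ∆ y) j = true ↔ x j ≠ y j := fun j => by
    rw [Pi.symmDiff_apply]
    cases x j <;> cases y j <;> decide
  have htop : x ∆ y = ⊤ ↔ ∀ i, x i ≠ y i := by
    simp only [funext_iff, Pi.top_apply, top_eq_true, hxy]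
  have hatom : (∃ i, cubeAtom i = x ∆ y) ↔ ∃! i, x i ≠ y i := by
    simp only [cubeAtom_eq_iff, hxy]
    exact ⟨fun ⟨i, h⟩ => ⟨i, (h i).2 rfl, fun j => (h j).1⟩,
      fun ⟨i, hi, hu⟩ => ⟨i, fun j => ⟨hu j, fun h => h ▸ hi⟩⟩⟩
  have hne : (∃! i, x i ≠ y i) → x ≠ y := fun ⟨i, hi, _⟩ h => hi (h ▸ rfl)
  change _ ∨ _ ↔ x ≠ y ∧ x ∆ y ∈ insert ⊤ (Finset.univ.image cubeAtom)
  simp only [Finset.mem_insert, Finset.mem_image, Finset.mem_univ, true_and, htop, hatom]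
  tauto

lemma bot_notMem_foldedCubeGenerators {n : ℕ} (hn : 1 ≤ n) : ⊥ ∉ foldedCubeGenerators n := by
  simp only [foldedCubeGenerators, Finset.mem_insert, Finset.mem_image, Finset.mem_univ, true_and,
    not_or, not_exists]
  exact ⟨fun h => by simpa using congrFun h ⟨0, hn⟩,
    fun i h => by simpa [cubeAtom] using congrFun h i⟩

lemma cubeAtom_injective {n : ℕ} : Function.Injective (cubeAtom (n := n)) := fun i j h => by
  simpa [cubeAtom] using congrFun h i

lemma card_foldedCubeGenerators {n : ℕ} (hn : 2 ≤ n) :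
    (foldedCubeGenerators n).card = n + 1 := by
  have : Nontrivial (Fin n) := Fin.nontrivial_iff_two_le.2 hn
  have htop : ⊤ ∉ Finset.univ.image (cubeAtom (n := n)) := by
    simp only [Finset.mem_image, Finset.mem_univ, true_and, not_exists]
    intro i h
    obtain ⟨j, hj⟩ := exists_ne i
    exact hj ((cubeAtom_eq_iff.1 h j).1 rfl)
  rw [foldedCubeGenerators, Finset.card_insert_of_notMem htop,
    Finset.card_image_of_injective _ cubeAtom_injective, Finset.card_univ, Fintype.card_fin]

lemma mpNumber_foldedCube {k : ℕ} (hk : 3 ≤ k) : mpNumber (foldedCube k) = k := by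
  rw [foldedCube_eq_symmDiffCayley, mpNumber_symmDiffCayley (bot_notMem_foldedCubeGenerators
    (by omega)), card_foldedCubeGenerators (by omega)]
  omega

lemma superMatched_foldedCube {k : ℕ} (hk : 4 ≤ k) : SuperMatched (foldedCube k) := by
  rw [foldedCube_eq_symmDiffCayley]
  exact superMatched_symmDiffCayley (bot_notMem_foldedCubeGenerators (by omega))
    (by rw [card_foldedCubeGenerators (by omega)]; omega)

/-- `FQ₃ ≅ K₄`: deleting a triangle leaves its three vertices adjacent only to the fourth one. -/
lemma not_superMatched_foldedCube_three : ¬ SuperMatched (foldedCube 3) := by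
  let a : Fin (3 - 1) → Bool := ![false, false]
  let b : Fin (3 - 1) → Bool := ![false, true]
  let c : Fin (3 - 1) → Bool := ![true, false]
  let d : Fin (3 - 1) → Bool := ![true, true]
  let F : Finset (Sym2 (Fin (3 - 1) → Bool)) := {s(a, b), s(a, c), s(b, c)}
  have hadj : ∀ x y, (foldedCube 3).Adj x y ↔ x ≠ y ∧ x ∆ y ∈ foldedCubeGenerators 2 := by
    rw [foldedCube_eq_symmDiffCayley]
    exact fun _ _ => Iff.rfl
  have hF : IsMPSet (foldedCube 3) F := by
    refine ⟨?_, not_hasPerfectMatching_of_adj_imp_eq (d := d) (by decide : a ≠ b) ?_ ?_⟩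
    · intro e he
      simp only [F, Finset.coe_insert, Finset.coe_singleton, Set.mem_insert_iff,
        Set.mem_singleton_iff] at he
      rcases he with rfl | rfl | rfl <;> exact (hadj _ _).2 (by decide)
    all_goals
      simp only [deleteEdges_adj, hadj, Finset.mem_coe]
      decide
  rintro ⟨-, hstar⟩
  obtain ⟨v, hv⟩ := hstar F hF (by rw [mpNumber_foldedCube le_rfl]; rfl)
  have hvF : ∀ e ∈ F, v ∈ e := fun e he => ((Set.ext_iff.1 hv e).1 he).2
  clear hv
  revert v
  decide

end FoldedCube

theorem stmt15 (k : ℕ) (hk : 3 ≤ k) :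
    SuperMatched (foldedCube k) ↔ 4 ≤ k := by
  refine ⟨fun h => ?_, superMatched_foldedCube⟩
  by_contra hk4
  obtain rfl : k = 3 := by omega
  exact not_superMatched_foldedCube_three h
end

section
/- Let G be a 3-regular connected vertex-transitive finite simple graph of girth 4 (triangle-free with a 4-cycle). Then every edge cut of G of size 3 isolates a single vertex. -/
open SimpleGraph

variable {V : Type*}

/-- `F` is an edge cut of `G`: the set of all edges between `X` and its complement,
for some `X` with both `X` and `Xᶜ` nonempty. -/
def IsEdgeCut (G : SimpleGraph V) (F : Set (Sym2 V)) : Prop :=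
  ∃ X : Set V, X.Nonempty ∧ Xᶜ.Nonempty ∧
    F = {e | ∃ a ∈ X, ∃ b ∈ Xᶜ, G.Adj a b ∧ e = s(a, b)}

section Aux

open scoped Classical

variable [Fintype V] (G : SimpleGraph V)

/-- The ordered pairs `(a,b)` with `a ∈ X`, `b ∉ X`, `a ~ b`. -/
noncomputable def cutP (X : Finset V) : Finset (V × V) :=
  Finset.univ.filter (fun p => p.1 ∈ X ∧ p.2 ∉ X ∧ G.Adj p.1 p.2)

lemma mem_cutP {X : Finset V} {p : V × V} :
    p ∈ cutP G X ↔ p.1 ∈ X ∧ p.2 ∉ X ∧ G.Adj p.1 p.2 := by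
  simp [cutP]

lemma cutP_submod (X Y : Finset V) :
    (cutP G (X ∩ Y)).card + (cutP G (X ∪ Y)).card ≤ (cutP G X).card + (cutP G Y).card := by
  have h1 : cutP G (X ∩ Y) ∪ cutP G (X ∪ Y) ⊆ cutP G X ∪ cutP G Y := by
    intro p hp
    simp only [Finset.mem_union, mem_cutP, Finset.mem_inter] at hp ⊢
    rcases hp with ⟨⟨h1, h2⟩, h3, h4⟩ | ⟨h1, h3, h4⟩
    · rcases (by tauto : p.2 ∉ X ∨ p.2 ∉ Y) with h | h
      · exact Or.inl ⟨h1, h, h4⟩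
      · exact Or.inr ⟨h2, h, h4⟩
    · simp only [Finset.mem_union, not_or] at h1 h3
      rcases h1 with h | h
      · exact Or.inl ⟨h, h3.1, h4⟩
      · exact Or.inr ⟨h, h3.2, h4⟩
  have h2 : cutP G (X ∩ Y) ∩ cutP G (X ∪ Y) ⊆ cutP G X ∩ cutP G Y := by
    intro p hp
    simp only [Finset.mem_inter, mem_cutP, Finset.mem_union, not_or] at hp ⊢
    obtain ⟨⟨⟨ha1, ha2⟩, _, h4⟩, _, ⟨hb1, hb2⟩, _⟩ := hp
    exact ⟨⟨ha1, hb1, h4⟩, ha2, hb2, h4⟩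
  calc (cutP G (X ∩ Y)).card + (cutP G (X ∪ Y)).card
      = (cutP G (X ∩ Y) ∪ cutP G (X ∪ Y)).card + (cutP G (X ∩ Y) ∩ cutP G (X ∪ Y)).card :=
        (Finset.card_union_add_card_inter _ _).symm
    _ ≤ (cutP G X ∪ cutP G Y).card + (cutP G X ∩ cutP G Y).card :=
        Nat.add_le_add (Finset.card_le_card h1) (Finset.card_le_card h2)
    _ = (cutP G X).card + (cutP G Y).card := Finset.card_union_add_card_inter _ _

lemma cutP_compl (X : Finset V) : (cutP G Xᶜ).card = (cutP G X).card := by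
  have h : cutP G Xᶜ = (cutP G X).image Prod.swap := by
    ext p
    simp only [Finset.mem_image, mem_cutP, Finset.mem_compl, not_not]
    constructor
    · rintro ⟨h1, h2, h3⟩
      exact ⟨p.swap, ⟨h2, by simpa using h1, h3.symm⟩, Prod.swap_swap p⟩
    · rintro ⟨q, ⟨h1, h2, h3⟩, rfl⟩
      exact ⟨by simpa using h2, by simpa using h1, h3.symm⟩
  rw [h, Finset.card_image_of_injective _ Prod.swap_injective]

lemma cutP_submod' (X Y : Finset V) :
    (cutP G (X \ Y)).card + (cutP G (Y \ X)).card ≤ (cutP G X).card + (cutP G Y).card := by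
  have h := cutP_submod G X Yᶜ
  have e1 : X ∩ Yᶜ = X \ Y := by ext a; simp [Finset.mem_sdiff, and_comm]
  have e2 : X ∪ Yᶜ = (Y \ X)ᶜ := by ext a; simp [Finset.mem_sdiff]; tauto
  rw [e1, e2, cutP_compl] at h
  calc (cutP G (X \ Y)).card + (cutP G (Y \ X)).card
      ≤ (cutP G X).card + (cutP G Yᶜ).card := h
    _ = (cutP G X).card + (cutP G Y).card := by rw [cutP_compl]

lemma cutP_sum (X : Finset V) :
    (cutP G X).card = ∑ a ∈ X, ((G.neighborFinset a) \ X).card := by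
  rw [Finset.card_eq_sum_card_fiberwise (f := Prod.fst) (t := X)
    (fun p hp => ((mem_cutP G).mp hp).1)]
  refine Finset.sum_congr rfl fun a ha => ?_
  have h : (cutP G X).filter (fun p => p.1 = a)
      = ((G.neighborFinset a) \ X).image (fun b => (a, b)) := by
    ext p
    simp only [Finset.mem_filter, mem_cutP, Finset.mem_image, Finset.mem_sdiff,
      mem_neighborFinset]
    constructor
    · rintro ⟨⟨h1, h2, h3⟩, h4⟩
      exact ⟨p.2, ⟨h4 ▸ h3, h2⟩, by rw [← h4]⟩
    · rintro ⟨b, ⟨h1, h2⟩, rfl⟩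
      exact ⟨⟨ha, h2, h1⟩, rfl⟩
  rw [h, Finset.card_image_of_injective _ (fun x y hxy => by simpa using hxy)]

lemma nbr_card (hreg : GIsRegular G 3) (v : V) : (G.neighborFinset v).card = 3 := by
  have h := hreg v
  have e : G.neighborSet v = ↑(G.neighborFinset v) := by ext; simp
  rwa [e, Set.ncard_coe_finset] at h

lemma cutP_star (hreg : GIsRegular G 3) (v : V) : (cutP G {v}).card = 3 := by
  have h : cutP G {v} = (G.neighborFinset v).image (fun b => (v, b)) := by
    ext p
    simp only [mem_cutP, Finset.mem_image, mem_neighborFinset, Finset.mem_singleton]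
    constructor
    · rintro ⟨h1, h2, h3⟩
      exact ⟨p.2, h1 ▸ h3, by rw [← h1]⟩
    · rintro ⟨b, h1, rfl⟩
      exact ⟨rfl, h1.ne', h1⟩
  rw [h, Finset.card_image_of_injective _ (fun x y hxy => by simpa using hxy), nbr_card G hreg]

lemma cutP_cross {X : Finset V} {a b : V} (w : G.Walk a b) (ha : a ∈ X) (hb : b ∉ X) :
    ∃ p, p ∈ cutP G X := by
  induction w with
  | nil => exact absurd ha hb
  | @cons u x v h w ih =>
    by_cases hx : x ∈ X
    · exact ih hx hb
    · exact ⟨(u, x), (mem_cutP G).mpr ⟨ha, hx, h⟩⟩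

lemma cutP_pos (hconn : G.Connected) {X : Finset V} (hne : X.Nonempty) (hne' : Xᶜ.Nonempty) :
    1 ≤ (cutP G X).card := by
  obtain ⟨a, ha⟩ := hne
  obtain ⟨b, hb⟩ := hne'
  obtain ⟨p, hp⟩ := cutP_cross G ((hconn.preconnected a b).some) ha (Finset.mem_compl.mp hb)
  exact Finset.card_pos.mpr ⟨p, hp⟩

lemma cutP_map (φ : G ≃g G) (X : Finset V) :
    (cutP G (X.image φ)).card = (cutP G X).card := by
  have h : cutP G (X.image φ) = (cutP G X).image (Prod.map φ φ) := by
    ext p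
    simp only [mem_cutP, Finset.mem_image]
    constructor
    · rintro ⟨h1, h2, h3⟩
      obtain ⟨a, ha, hae⟩ := h1
      refine ⟨(a, φ.symm p.2), ⟨ha, fun hc => h2 ⟨_, hc, φ.apply_symm_apply p.2⟩, ?_⟩, ?_⟩
      · rw [← φ.map_adj_iff]
        simp only [hae, RelIso.apply_symm_apply]
        exact h3
      · simp [Prod.map, hae, Prod.ext_iff]
    · rintro ⟨⟨a, b⟩, ⟨h1, h2, h3⟩, rfl⟩
      exact ⟨⟨a, h1, rfl⟩, fun ⟨c, hc, hce⟩ => h2 (by rwa [← φ.toEquiv.injective hce]),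
        φ.map_adj_iff.mpr h3⟩
  rw [h]
  exact Finset.card_image_of_injective _
    (Function.Injective.prodMap φ.toEquiv.injective φ.toEquiv.injective)

/-- The key structural lemma: there is no "bad" edge cut of size at most 3, i.e. one
with at least two vertices on each side. -/
lemma no_bad (hreg : GIsRegular G 3) (hconn : G.Connected)
    (hvt : VertexTransitive G) (htf : G.CliqueFree 3) :
    ¬ ∃ X : Finset V, X.Nonempty ∧ Xᶜ.Nonempty ∧ (cutP G X).card = 3 ∧
        2 ≤ X.card ∧ 2 ≤ Xᶜ.card := by
  rintro ⟨X₀, hX₀ne, hX₀ne', hX₀d, hX₀c, hX₀c'⟩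
  -- the edge connectivity
  set S : Set ℕ := {n | ∃ X : Finset V, X.Nonempty ∧ Xᶜ.Nonempty ∧ (cutP G X).card = n} with hS
  have hSne : S.Nonempty := ⟨3, X₀, hX₀ne, hX₀ne', hX₀d⟩
  set lam := sInf S with hlam
  have hlam_le : ∀ X : Finset V, X.Nonempty → Xᶜ.Nonempty → lam ≤ (cutP G X).card :=
    fun X h h' => Nat.sInf_le ⟨X, h, h', rfl⟩
  have hlam3 : lam ≤ 3 := hX₀d ▸ hlam_le X₀ hX₀ne hX₀ne'
  have hlam1 : 1 ≤ lam := by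
    obtain ⟨W, hW, hW', hWd⟩ := Nat.sInf_mem hSne
    rw [hlam, ← hWd]; exact cutP_pos G hconn hW hW'
  -- `Good` sets: sides of minimum cuts with at least 2 vertices on both sides
  set Good : Finset V → Prop := fun X =>
    X.Nonempty ∧ Xᶜ.Nonempty ∧ (cutP G X).card = lam ∧ 2 ≤ X.card ∧ 2 ≤ Xᶜ.card with hGood
  have hGood_compl : ∀ X, Good X → Good Xᶜ := by
    rintro X ⟨h1, h2, h3, h4, h5⟩
    refine ⟨h2, by rwa [compl_compl], by rwa [cutP_compl], h5, by rwa [compl_compl]⟩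
  have hGoodne : ∃ X, Good X := by
    rcases Nat.lt_or_ge lam 3 with hl | hl
    · obtain ⟨W, hW, hW', hWd⟩ := Nat.sInf_mem hSne
      refine ⟨W, hW, hW', hWd, ?_, ?_⟩
      · by_contra hc
        push_neg at hc
        interval_cases h : W.card
        · exact absurd (Finset.card_eq_zero.mp h ▸ hW) (by simp)
        · obtain ⟨v, hv⟩ := Finset.card_eq_one.mp h
          rw [hv, cutP_star G hreg] at hWd
          omega
      · by_contra hc
        push_neg at hc
        interval_cases h : Wᶜ.card
        · exact absurd (Finset.card_eq_zero.mp h ▸ hW') (by simp)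
        · obtain ⟨v, hv⟩ := Finset.card_eq_one.mp h
          have : (cutP G Wᶜ).card = 3 := by rw [hv]; exact cutP_star G hreg v
          rw [cutP_compl] at this
          omega
    · exact ⟨X₀, hX₀ne, hX₀ne', by omega, hX₀c, hX₀c'⟩
  -- pick an atom: a Good set of minimum cardinality
  have hTne : {n | ∃ X, Good X ∧ X.card = n}.Nonempty := by
    obtain ⟨X, hX⟩ := hGoodne
    exact ⟨X.card, X, hX, rfl⟩
  obtain ⟨A, hA, hAcard⟩ := Nat.sInf_mem hTne
  have hmin : ∀ Y, Good Y → A.card ≤ Y.card := by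
    intro Y hY
    rw [hAcard]
    exact Nat.sInf_le ⟨Y, hY, rfl⟩
  obtain ⟨hAne, hAne', hAd, hAc2, hAc2'⟩ := hA
  have hAle : A.card ≤ Aᶜ.card :=
    hmin Aᶜ (hGood_compl A ⟨hAne, hAne', hAd, hAc2, hAc2'⟩)
  have hcardV : A.card + Aᶜ.card = Fintype.card V := by
    rw [Finset.card_compl]
    have := Finset.card_le_univ A
    omega
  -- crossing lemma: any Good set of the same size meeting A equals A
  have hcross : ∀ B : Finset V, Good B → B.card = A.card → (A ∩ B).Nonempty → B = A := by
    intro B hB hBA hint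
    by_contra hne
    obtain ⟨hBne, hBne', hBd, hBc2, hBc2'⟩ := hB
    have hABne : (A \ B).Nonempty := by
      rw [Finset.sdiff_nonempty]
      intro hsub
      exact hne (Finset.eq_of_subset_of_card_le hsub (by omega)).symm
    have hBAne : (B \ A).Nonempty := by
      rw [Finset.sdiff_nonempty]
      intro hsub
      exact hne (Finset.eq_of_subset_of_card_le hsub (by omega))
    have hABc : (A \ B)ᶜ.Nonempty := by
      obtain ⟨b, hb⟩ := hBne
      exact ⟨b, by simp [Finset.mem_sdiff, hb]⟩
    have hBAc : (B \ A)ᶜ.Nonempty := by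
      obtain ⟨a, ha⟩ := hAne
      exact ⟨a, by simp [Finset.mem_sdiff, ha]⟩
    have hsum : (cutP G (A \ B)).card + (cutP G (B \ A)).card ≤ lam + lam := by
      have h := cutP_submod' G A B
      rw [hAd, hBd] at h
      exact h
    have hd1 := hlam_le _ hABne hABc
    have hd2 := hlam_le _ hBAne hBAc
    have hdAB : (cutP G (A \ B)).card = lam := by omega
    have hdBA : (cutP G (B \ A)).card = lam := by omega
    -- |A \ B| = 1
    obtain ⟨x, hx⟩ := hint
    obtain ⟨hxA, hxB⟩ := Finset.mem_inter.mp hx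
    have hint : (A ∩ B).Nonempty := ⟨x, hx⟩
    have hxAB : x ∈ A ∩ B := Finset.mem_inter.mpr ⟨hxA, hxB⟩
    have hltAB : (A \ B).card < A.card :=
      Finset.card_lt_card ⟨Finset.sdiff_subset, fun hsub =>
        by simpa [Finset.mem_sdiff, hxB] using hsub hxA⟩
    have hcplAB : 2 ≤ (A \ B)ᶜ.card := by
      refine le_trans hBc2 (Finset.card_le_card ?_)
      intro b hb
      simp only [Finset.mem_compl, Finset.mem_sdiff]
      tauto
    have hcAB1 : (A \ B).card = 1 := by
      have hng : ¬ Good (A \ B) := fun hg => absurd (hmin _ hg) (by omega)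
      have hpos := Finset.card_pos.mpr hABne
      by_contra hc
      exact hng ⟨hABne, hABc, hdAB, by omega, hcplAB⟩
    have hltBA : (B \ A).card < A.card := by
      have := Finset.card_sdiff_add_card_inter B A
      have hposint : 0 < (B ∩ A).card := Finset.card_pos.mpr ⟨x, Finset.mem_inter.mpr ⟨hxB, hxA⟩⟩
      omega
    have hcplBA : 2 ≤ (B \ A)ᶜ.card := by
      refine le_trans hAc2 (Finset.card_le_card ?_)
      intro a ha
      simp only [Finset.mem_compl, Finset.mem_sdiff]
      tauto
    have hcBA1 : (B \ A).card = 1 := by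
      have hng : ¬ Good (B \ A) := fun hg => absurd (hmin _ hg) (by omega)
      have hpos := Finset.card_pos.mpr hBAne
      by_contra hc
      exact hng ⟨hBAne, hBAc, hdBA, by omega, hcplBA⟩
    have hcint : (A ∩ B).card + 1 = A.card := by
      have := Finset.card_sdiff_add_card_inter A B
      omega
    -- A ∪ B is proper
    have hcup : (A ∪ B).card = A.card + 1 := by
      have := Finset.card_union_add_card_inter A B
      omega
    have hUne : (A ∪ B).Nonempty := Finset.Nonempty.mono Finset.subset_union_left hAne
    have hUc : (A ∪ B)ᶜ.Nonempty := by
      rw [← Finset.card_pos, Finset.card_compl]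
      omega
    have hIc : (A ∩ B)ᶜ.Nonempty := by
      obtain ⟨c, hc⟩ := hAne'
      exact ⟨c, by simp only [Finset.mem_compl, Finset.mem_inter] at hc ⊢; tauto⟩
    have hsum2 : (cutP G (A ∩ B)).card + (cutP G (A ∪ B)).card ≤ lam + lam := by
      have h := cutP_submod G A B
      rw [hAd, hBd] at h
      exact h
    have hd3 := hlam_le _ hint hIc
    have hd4 := hlam_le _ hUne hUc
    have hdint : (cutP G (A ∩ B)).card = lam := by omega
    have hcplI : 2 ≤ (A ∩ B)ᶜ.card := by
      refine le_trans hAc2' (Finset.card_le_card ?_)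
      intro a ha
      simp only [Finset.mem_compl, Finset.mem_inter] at ha ⊢
      tauto
    have hA2 : A.card = 2 := by
      have hng : ¬ Good (A ∩ B) := fun hg => absurd (hmin _ hg) (by omega)
      have hpos := Finset.card_pos.mpr hint
      by_contra hc
      exact hng ⟨hint, hIc, hdint, by omega, hcplI⟩
    -- parity: a 2-element side of a cubic graph sends out at least 4 edges
    have h4 : 4 ≤ (cutP G A).card := by
      rw [cutP_sum]
      have hterm : ∀ a ∈ A, 2 ≤ ((G.neighborFinset a) \ A).card := by
        intro a ha
        have h3 : (G.neighborFinset a).card = 3 := nbr_card G hreg a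
        have hsub : G.neighborFinset a ∩ A ⊆ A.erase a := by
          intro b hb
          simp only [Finset.mem_inter, mem_neighborFinset] at hb
          exact Finset.mem_erase.mpr ⟨hb.1.ne', hb.2⟩
        have hle := Finset.card_le_card hsub
        rw [Finset.card_erase_of_mem ha] at hle
        have := Finset.card_sdiff_add_card_inter (G.neighborFinset a) A
        omega
      have hs := Finset.card_nsmul_le_sum A _ 2 hterm
      rw [smul_eq_mul, hA2] at hs
      omega
    omega
  -- the stabiliser of A acts transitively on A
  have hstab : ∀ u ∈ A, ∀ v ∈ A, ∃ φ : G ≃g G, A.image φ = A ∧ φ u = v := by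
    intro u hu v hv
    obtain ⟨φ, hφ⟩ := hvt u v
    have hBcard : (A.image φ).card = A.card := Finset.card_image_of_injective _ φ.toEquiv.injective
    have hBGood : Good (A.image φ) := by
      refine ⟨hAne.image _, ?_, by rw [cutP_map]; exact hAd, by omega, ?_⟩
      · rw [← Finset.card_pos, Finset.card_compl, hBcard]
        omega
      · rw [Finset.card_compl, hBcard]
        omega
    exact ⟨φ, hcross _ hBGood hBcard ⟨v, Finset.mem_inter.mpr ⟨hv, hφ ▸ Finset.mem_image_of_mem φ hu⟩⟩, hφ⟩
  -- the inner degree is constant on A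
  obtain ⟨a₀, ha₀⟩ := hAne
  set r := (G.neighborFinset a₀ ∩ A).card with hrdef
  have hr : ∀ a ∈ A, (G.neighborFinset a ∩ A).card = r := by
    intro a ha
    obtain ⟨φ, hφA, hφa⟩ := hstab a₀ ha₀ a ha
    have hmem : ∀ b, b ∈ A ↔ φ.symm b ∈ A := by
      intro b
      constructor
      · intro hb
        rw [← hφA] at hb
        obtain ⟨c, hc, rfl⟩ := Finset.mem_image.mp hb
        simpa using hc
      · intro hb
        have := Finset.mem_image_of_mem φ hb
        rwa [hφA, φ.apply_symm_apply] at this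
    have himg : G.neighborFinset a ∩ A = (G.neighborFinset a₀ ∩ A).image φ := by
      ext b
      simp only [Finset.mem_inter, mem_neighborFinset, Finset.mem_image]
      constructor
      · rintro ⟨hadj, hbA⟩
        refine ⟨φ.symm b, ⟨?_, (hmem b).mp hbA⟩, φ.apply_symm_apply b⟩
        rw [← φ.map_adj_iff, φ.apply_symm_apply, hφa]
        exact hadj
      · rintro ⟨c, ⟨hadj, hcA⟩, rfl⟩
        refine ⟨?_, hφA ▸ Finset.mem_image_of_mem φ hcA⟩
        rw [← hφa]
        exact φ.map_adj_iff.mpr hadj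
    rw [himg]
    exact Finset.card_image_of_injective _ (Equiv.injective φ.toEquiv)
  -- counting: lam = |A| * (3 - r)
  have hterm : ∀ a ∈ A, ((G.neighborFinset a) \ A).card = 3 - r := by
    intro a ha
    have h3 : (G.neighborFinset a).card = 3 := nbr_card G hreg a
    have := Finset.card_sdiff_add_card_inter (G.neighborFinset a) A
    rw [hr a ha, h3] at this
    omega
  have hcount : lam = A.card * (3 - r) := by
    rw [← hAd, cutP_sum, Finset.sum_congr rfl hterm, Finset.sum_const, smul_eq_mul]
  have hr3 : r ≤ 3 := by
    rw [hrdef, ← nbr_card G hreg a₀]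
    exact Finset.card_le_card Finset.inter_subset_left
  have hrA : r + 1 ≤ A.card := by
    have hsub : G.neighborFinset a₀ ∩ A ⊆ A.erase a₀ := by
      intro b hb
      simp only [Finset.mem_inter, mem_neighborFinset] at hb
      exact Finset.mem_erase.mpr ⟨hb.1.ne', hb.2⟩
    have hle := Finset.card_le_card hsub
    rw [Finset.card_erase_of_mem ha₀, ← hrdef] at hle
    omega
  have ht1 : 3 - r = 1 := by
    by_contra h
    rcases Nat.lt_or_ge (3 - r) 1 with hlt | hge
    · have h0 : 3 - r = 0 := by omega
      rw [h0, mul_zero] at hcount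
      omega
    · have h2 : 2 ≤ 3 - r := by omega
      have := Nat.mul_le_mul hAc2 h2
      omega
  have hrval : r = 2 := by omega
  have hlamA : lam = A.card := by rw [hcount, ht1, mul_one]
  have hA3 : A.card = 3 ∧ lam = 3 := by
    constructor <;> omega
  -- A is a triangle, contradicting triangle-freeness
  have hclique : ∀ x ∈ A, ∀ y ∈ A, x ≠ y → G.Adj x y := by
    intro x hx y hy hxy
    have hsub : G.neighborFinset x ∩ A ⊆ A.erase x := by
      intro b hb
      simp only [Finset.mem_inter, mem_neighborFinset] at hb
      exact Finset.mem_erase.mpr ⟨hb.1.ne', hb.2⟩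
    have hcerase : (A.erase x).card = 2 := by
      rw [Finset.card_erase_of_mem hx, hA3.1]
    have heq : G.neighborFinset x ∩ A = A.erase x :=
      Finset.eq_of_subset_of_card_le hsub (by rw [hr x hx, hrval, hcerase])
    have hy' : y ∈ A.erase x := Finset.mem_erase.mpr ⟨hxy.symm, hy⟩
    rw [← heq, Finset.mem_inter, mem_neighborFinset] at hy'
    exact hy'.1
  exact htf A ⟨fun x hx y hy hxy => hclique x hx y hy hxy, hA3.1⟩

end Aux

theorem stmt17 [Fintype V] (G : SimpleGraph V)
    (hreg : GIsRegular G 3) (hconn : G.Connected)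
    (hvt : VertexTransitive G) (htf : G.CliqueFree 3)
    (hc4 : ∃ (u : V) (c : G.Walk u u), c.IsCycle ∧ c.length = 4) :
    ∀ F : Set (Sym2 V), IsEdgeCut G F → F.ncard = 3 →
      ∃ v : V, F = G.incidenceSet v := by
  classical
  intro F hF hF3
  obtain ⟨X, hXne, hXcne, hFdef⟩ := hF
  set X' : Finset V := Finset.univ.filter (· ∈ X) with hX'def
  have hX' : ∀ a, a ∈ X' ↔ a ∈ X := by intro a; simp [hX'def]
  have hX'c : ∀ a, a ∈ X'ᶜ ↔ a ∈ Xᶜ := by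
    intro a
    simp [Finset.mem_compl, hX' a]
  -- F is the image of the cut pairs
  have hFim : F = (fun p : V × V => s(p.1, p.2)) '' ↑(cutP G X') := by
    rw [hFdef]
    ext e
    simp only [Set.mem_setOf_eq, Set.mem_image, Finset.mem_coe, mem_cutP]
    constructor
    · rintro ⟨a, ha, b, hb, hadj, rfl⟩
      exact ⟨(a, b), ⟨(hX' a).mpr ha, fun hc => hb ((hX' b).mp hc), hadj⟩, rfl⟩
    · rintro ⟨⟨a, b⟩, ⟨ha, hb, hadj⟩, rfl⟩
      exact ⟨a, (hX' a).mp ha, b, fun hc => hb ((hX' b).mpr hc), hadj, rfl⟩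
  have hinj : Set.InjOn (fun p : V × V => s(p.1, p.2)) ↑(cutP G X') := by
    rintro ⟨a, b⟩ hp ⟨c, d⟩ hq' heq
    simp only [Finset.mem_coe, mem_cutP] at hp hq'
    simp only [Sym2.eq, Sym2.rel_iff', Prod.mk.injEq, Prod.swap_prod_mk] at heq
    rcases heq with ⟨rfl, rfl⟩ | ⟨rfl, rfl⟩
    · rfl
    · exact absurd hq'.1 hp.2.1
  have hcard : (cutP G X').card = 3 := by
    rw [hFim, Set.ncard_image_of_injOn hinj, Set.ncard_coe_finset] at hF3
    exact hF3
  have hX'ne : X'.Nonempty := by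
    obtain ⟨a, ha⟩ := hXne
    exact ⟨a, (hX' a).mpr ha⟩
  have hX'cne : X'ᶜ.Nonempty := by
    obtain ⟨a, ha⟩ := hXcne
    exact ⟨a, (hX'c a).mpr ha⟩
  have hsmall : X'.card = 1 ∨ X'ᶜ.card = 1 := by
    by_contra hc
    push_neg at hc
    have h1 := Finset.card_pos.mpr hX'ne
    have h2 := Finset.card_pos.mpr hX'cne
    exact no_bad G hreg hconn hvt htf ⟨X', hX'ne, hX'cne, hcard, by omega, by omega⟩
  rcases hsmall with h | h
  · -- X = {v}
    obtain ⟨v, hv⟩ := Finset.card_eq_one.mp h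
    have hXv : ∀ a, a ∈ X ↔ a = v := by
      intro a
      rw [← hX' a, hv, Finset.mem_singleton]
    refine ⟨v, ?_⟩
    rw [hFdef]
    ext e
    simp only [Set.mem_setOf_eq]
    constructor
    · rintro ⟨a, ha, b, hb, hadj, rfl⟩
      rw [hXv a] at ha
      subst ha
      exact ⟨(G.mem_edgeSet).mpr hadj, Sym2.mem_mk_left a b⟩
    · rintro ⟨he, hv'⟩
      obtain ⟨w, rfl⟩ := Sym2.mem_iff_exists.mp hv'
      have hadj : G.Adj v w := he
      refine ⟨v, (hXv v).mpr rfl, w, ?_, hadj, rfl⟩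
      intro hw
      exact hadj.ne' (((hXv w).mp hw) ▸ rfl)
  · -- Xᶜ = {v}
    obtain ⟨v, hv⟩ := Finset.card_eq_one.mp h
    have hXv : ∀ a, a ∈ Xᶜ ↔ a = v := by
      intro a
      rw [← hX'c a, hv, Finset.mem_singleton]
    refine ⟨v, ?_⟩
    rw [hFdef]
    ext e
    simp only [Set.mem_setOf_eq]
    constructor
    · rintro ⟨a, ha, b, hb, hadj, rfl⟩
      rw [hXv b] at hb
      subst hb
      exact ⟨(G.mem_edgeSet).mpr hadj, Sym2.mem_mk_right a b⟩
    · rintro ⟨he, hv'⟩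
      obtain ⟨w, rfl⟩ := Sym2.mem_iff_exists.mp hv'
      have hadj : G.Adj v w := he
      have hwX : w ∈ X := by
        by_contra hw
        exact hadj.ne' (((hXv w).mp (Set.mem_compl hw)))
      exact ⟨w, hwX, v, (hXv v).mpr rfl, hadj.symm, Sym2.eq_swap⟩
end
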